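/- arXiv:1312.4769 — 7 statements merged into one kernel-verified Lean document; each statement's English description precedes it below -/
import Mathlib

section
/- Every left |w|-Riedtmann configuration is a |w|-Hom-configuration, and every right |w|-Riedtmann configuration is a |w|-Hom-configuration. -/
/- Combinatorial model of the triangulated category `T_w` generated by a `w`-spherical
object (`w ≤ -1`), via `d`-admissible arcs of the ∞-gon, where `d = w - 1`,
`|d| = 1 - w`, `|w| = -w`. -/

namespace SphericalArcs

/-- An arc is a pair of integers `(t, u)`. -/
abbrev Arc : Type := ℤ × ℤ

/-- `(t,u)` is a `d`-admissible arc: `t > u`, `t - u ≥ |d| - 1 = -w` and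
`t - u ≡ -1 (mod |d|)`, i.e. `(1 - w) ∣ (t - u + 1)`. -/
def Adm (w : ℤ) (a : Arc) : Prop :=
  a.2 < a.1 ∧ -w ≤ a.1 - a.2 ∧ (1 - w) ∣ (a.1 - a.2 + 1)

/-- `k(t,u) = (t - u + 1) / |d|`. -/
def kk (w : ℤ) (a : Arc) : ℤ := (a.1 - a.2 + 1) / (1 - w)

/-- `c ∈ F⁺(a)`: `c = (x,y)` is `d`-admissible, `x = a.1 + i·d` for some
`0 ≤ i ≤ k(a) - 1`, and `y ≤ a.2`. -/
def Fplus (w : ℤ) (a c : Arc) : Prop :=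
  Adm w c ∧ (∃ i : ℤ, 0 ≤ i ∧ i ≤ kk w a - 1 ∧ c.1 = a.1 + i * (w - 1)) ∧ c.2 ≤ a.2

/-- `c ∈ F⁻(a)`: `c = (x,y)` is `d`-admissible, `y = a.2 - i·d` for some
`0 ≤ i ≤ k(a) - 1`, and `x ≥ a.1`. -/
def Fminus (w : ℤ) (a c : Arc) : Prop :=
  Adm w c ∧ (∃ i : ℤ, 0 ≤ i ∧ i ≤ kk w a - 1 ∧ c.2 = a.2 - i * (w - 1)) ∧ a.1 ≤ c.1

/-- The Serre functor: `S(t,u) = (t - w, u - w)`. -/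
def Serre (w : ℤ) (a : Arc) : Arc := (a.1 - w, a.2 - w)

/-- `Hom(a,c) ≠ 0` iff `c ∈ F⁺(a) ∪ F⁻(S(a))`. -/
def HomNe (w : ℤ) (a c : Arc) : Prop := Fplus w a c ∨ Fminus w (Serre w a) c

/-- `Ext^j(a,b) ≠ 0` iff `Hom(a, Σ^j b) ≠ 0`, where `Σ^j b = (b.1 - j, b.2 - j)`. -/
def ExtNe (w : ℤ) (j : ℤ) (a b : Arc) : Prop := HomNe w a (b.1 - j, b.2 - j)

/-- Two arcs `(t,u)` and `(t',u')` cross if `u < u' < t < t'` or `u' < u < t' < t`. -/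
def Cross (a b : Arc) : Prop :=
  (a.2 < b.2 ∧ b.2 < a.1 ∧ a.1 < b.1) ∨ (b.2 < a.2 ∧ a.2 < b.1 ∧ b.1 < a.1)

/-- Two arcs share a vertex if `{t,u} ∩ {t',u'} ≠ ∅`. -/
def ShareVertex (a b : Arc) : Prop :=
  a.1 = b.1 ∨ a.1 = b.2 ∨ a.2 = b.1 ∨ a.2 = b.2

/-- A `|w|`-Hom-configuration: a set `H` of `d`-admissible arcs such that a
`d`-admissible arc `h` belongs to `H` iff `Ext^i(x,h) = 0` for every `x ∈ H` and
`i ∈ {w+1, …, -1}`, and `Ext^i(x,h) = 0` for every `x ∈ H \ {h}` and `i ∈ {0, w}`. -/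
def IsHomConfig (w : ℤ) (H : Set Arc) : Prop :=
  (∀ h ∈ H, Adm w h) ∧
  ∀ h : Arc, Adm w h →
    (h ∈ H ↔
      (∀ x ∈ H, ∀ i : ℤ, w + 1 ≤ i → i ≤ -1 → ¬ ExtNe w i x h) ∧
      (∀ x ∈ H, x ≠ h → ¬ ExtNe w 0 x h ∧ ¬ ExtNe w w x h))

/-- `v` is an isolated vertex of `H`: it is not an endpoint of any arc of `H`. -/
def Isolated (H : Set Arc) (v : ℤ) : Prop := ∀ a ∈ H, a.1 ≠ v ∧ a.2 ≠ v

/-- `a ∈ H` is an overarc of `v`: `a.2 < v < a.1`. -/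
def IsOverarc (H : Set Arc) (a : Arc) (v : ℤ) : Prop := a ∈ H ∧ a.2 < v ∧ v < a.1

/-- `a` is the smallest overarc of `v` in `H`. -/
def IsSmallestOverarc (H : Set Arc) (a : Arc) (v : ℤ) : Prop :=
  IsOverarc H a v ∧ ∀ b : Arc, IsOverarc H b v → b.2 ≤ a.2 ∧ a.1 ≤ b.1

/-- The set of isolated vertices of `H` having no overarc in `H`. -/
def NoOverarcIsolated (H : Set Arc) : Set ℤ :=
  {v | Isolated H v ∧ ∀ a : Arc, ¬ IsOverarc H a v}

/-- A left `|w|`-Riedtmann configuration. -/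
def IsLeftRiedtmann (w : ℤ) (C : Set Arc) : Prop :=
  (∀ c ∈ C, Adm w c) ∧
  (∀ x ∈ C, ∀ y ∈ C, x ≠ y → ∀ i : ℤ, w ≤ i → i ≤ 0 → ¬ ExtNe w i x y) ∧
  ∀ z : Arc, Adm w z → ∃ x ∈ C, ∃ i : ℤ, w + 1 ≤ i ∧ i ≤ 0 ∧ ExtNe w i x z

/-- A right `|w|`-Riedtmann configuration. -/
def IsRightRiedtmann (w : ℤ) (C : Set Arc) : Prop :=
  (∀ c ∈ C, Adm w c) ∧
  (∀ x ∈ C, ∀ y ∈ C, x ≠ y → ∀ i : ℤ, w ≤ i → i ≤ 0 → ¬ ExtNe w i x y) ∧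
  ∀ z : Arc, Adm w z → ∃ x ∈ C, ∃ i : ℤ, w + 1 ≤ i ∧ i ≤ 0 ∧ ExtNe w i z x

/-! An arc `h` satisfying the Hom-configuration conditions with respect to an Ext-orthogonal
set `C` is Ext-orthogonal, in degrees `w, …, 0`, to every arc of `C` other than itself; so as
soon as some `x ∈ C` has `Ext^i(x, h) ≠ 0` with `w ≤ i ≤ 0`, necessarily `h = x ∈ C`. For a
left Riedtmann configuration the covering condition provides such an `x` directly. For a right
one it provides `Ext^i(h, x) ≠ 0`, which Serre duality `Ext^i(a, b) ≠ 0 ↔ Ext^(w-i)(b, a) ≠ 0`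
turns into the same situation. In the arc model this duality is the statement that
`c ∈ F⁺(a) ↔ a ∈ F⁻(c)`, together with invariance of everything under translation. -/

def translate (s : ℤ) (a : Arc) : Arc := (a.1 + s, a.2 + s)

@[simp] lemma translate_fst (s : ℤ) (a : Arc) : (translate s a).1 = a.1 + s := rfl

@[simp] lemma translate_snd (s : ℤ) (a : Arc) : (translate s a).2 = a.2 + s := rfl

lemma translate_translate (s t : ℤ) (a : Arc) :
    translate s (translate t a) = translate (s + t) a := by
  simp only [translate, add_assoc, add_comm t]

@[simp] lemma translate_zero (a : Arc) : translate 0 a = a := by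
  simp only [translate, add_zero]

lemma serre_eq_translate (w : ℤ) (a : Arc) : Serre w a = translate (-w) a := by
  simp only [Serre, translate, sub_eq_add_neg]

lemma extNe_iff_homNe_translate (w i : ℤ) (a b : Arc) :
    ExtNe w i a b ↔ HomNe w a (translate (-i) b) := by
  simp only [ExtNe, translate, sub_eq_add_neg]

section Translation

variable (w s : ℤ) (a c : Arc)

@[simp] lemma adm_translate : Adm w (translate s a) ↔ Adm w a := by
  simp only [Adm, translate_fst, translate_snd, add_sub_add_right_eq_sub, add_lt_add_iff_right]

@[simp] lemma kk_translate : kk w (translate s a) = kk w a := by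
  simp only [kk, translate_fst, translate_snd, add_sub_add_right_eq_sub]

lemma fplus_translate : Fplus w (translate s a) (translate s c) ↔ Fplus w a c := by
  simp only [Fplus, adm_translate, kk_translate, translate_fst, translate_snd,
    add_le_add_iff_right]
  exact and_congr_right' <| and_congr_left' <| exists_congr fun i => by
    constructor <;> rintro ⟨hi₀, hik, h⟩ <;> exact ⟨hi₀, hik, by linarith⟩

lemma fminus_translate : Fminus w (translate s a) (translate s c) ↔ Fminus w a c := by
  simp only [Fminus, adm_translate, kk_translate, translate_fst, translate_snd,
    add_le_add_iff_right]
  exact and_congr_right' <| and_congr_left' <| exists_congr fun i => by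
    constructor <;> rintro ⟨hi₀, hik, h⟩ <;> exact ⟨hi₀, hik, by linarith⟩

lemma homNe_translate : HomNe w (translate s a) (translate s c) ↔ HomNe w a c := by
  rw [HomNe, HomNe, serre_eq_translate, serre_eq_translate, translate_translate, add_comm,
    ← translate_translate, fplus_translate, fminus_translate]

end Translation

lemma kk_mul_eq {w : ℤ} {a : Arc} (ha : Adm w a) : kk w a * (1 - w) = a.1 - a.2 + 1 :=
  Int.ediv_mul_cancel ha.2.2

lemma fplus_iff_fminus {w : ℤ} (hw : w ≤ -1) {a c : Arc} (ha : Adm w a) (hc : Adm w c) :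
    Fplus w a c ↔ Fminus w c a := by
  have hka := kk_mul_eq ha
  have hkc := kk_mul_eq hc
  have hD : 0 < 1 - w := by omega
  constructor
  · rintro ⟨-, ⟨i, hi₀, hik, hi⟩, hle⟩
    -- the index of `a.2` on the `F⁻(c)` side is `i - k(a) + k(c)`
    have hj : (i - kk w a + kk w c) * (1 - w) = a.2 - c.2 := by
      linear_combination hi - hka + hkc
    refine ⟨ha, ⟨i - kk w a + kk w c, ?_, by linarith, by linear_combination -hj⟩, by nlinarith⟩
    exact nonneg_of_mul_nonneg_left (hj ▸ sub_nonneg.2 hle) hD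
  · rintro ⟨-, ⟨j, hj₀, hjk, hj⟩, hle⟩
    have hi : (j + kk w a - kk w c) * (1 - w) = a.1 - c.1 := by
      linear_combination -hj + hka - hkc
    refine ⟨hc, ⟨j + kk w a - kk w c, ?_, by linarith, by linear_combination hi⟩, by nlinarith⟩
    exact nonneg_of_mul_nonneg_left (hi ▸ sub_nonneg.2 hle) hD

lemma homNe_iff_homNe_serre {w : ℤ} (hw : w ≤ -1) {a c : Arc} (ha : Adm w a) (hc : Adm w c) :
    HomNe w a c ↔ HomNe w c (Serre w a) := by
  have hSa : Adm w (Serre w a) := by rwa [serre_eq_translate, adm_translate]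
  rw [HomNe, HomNe, fplus_iff_fminus hw ha hc, fplus_iff_fminus hw hc hSa, serre_eq_translate w c,
    serre_eq_translate w a, fminus_translate, or_comm]

lemma extNe_iff_extNe_sub {w : ℤ} (hw : w ≤ -1) {a b : Arc} (ha : Adm w a) (hb : Adm w b)
    (i : ℤ) : ExtNe w i a b ↔ ExtNe w (w - i) b a := by
  rw [extNe_iff_homNe_translate, homNe_iff_homNe_serre hw ha ((adm_translate w _ b).2 hb),
    ← homNe_translate w i, translate_translate, serre_eq_translate, translate_translate,
    add_neg_cancel, translate_zero, extNe_iff_homNe_translate, neg_sub, sub_eq_add_neg]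

lemma not_extNe_self {w i : ℤ} (hw : w ≤ -1) (hi₁ : w + 1 ≤ i) (hi₂ : i ≤ -1) (a : Arc) :
    ¬ ExtNe w i a a := by
  rintro (⟨-, -, hle⟩ | ⟨-, ⟨m, hm₀, -, hm⟩, -⟩)
  · simp only at hle
    omega
  · simp only [Serre] at hm
    nlinarith

def ExtOrthogonal (w : ℤ) (C : Set Arc) : Prop :=
  ∀ x ∈ C, ∀ y ∈ C, x ≠ y → ∀ i : ℤ, w ≤ i → i ≤ 0 → ¬ ExtNe w i x y

def IsHomCompatible (w : ℤ) (H : Set Arc) (h : Arc) : Prop :=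
  (∀ x ∈ H, ∀ i : ℤ, w + 1 ≤ i → i ≤ -1 → ¬ ExtNe w i x h) ∧
  (∀ x ∈ H, x ≠ h → ¬ ExtNe w 0 x h ∧ ¬ ExtNe w w x h)

lemma isHomCompatible_of_mem {w : ℤ} (hw : w ≤ -1) {C : Set Arc} (hC : ExtOrthogonal w C)
    {h : Arc} (hh : h ∈ C) : IsHomCompatible w C h := by
  refine ⟨fun x hx i hi₁ hi₂ => ?_, fun x hx hne => ⟨hC x hx h hh hne 0 (by omega) le_rfl, ?_⟩⟩
  · obtain rfl | hne := eq_or_ne x h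
    · exact not_extNe_self hw hi₁ hi₂ x
    · exact hC x hx h hh hne i (by omega) (by omega)
  · exact hC x hx h hh hne w le_rfl (by omega)

lemma IsHomCompatible.eq_of_extNe {w : ℤ} {H : Set Arc} {h x : Arc}
    (hh : IsHomCompatible w H h) (hx : x ∈ H) {i : ℤ} (hi₁ : w ≤ i) (hi₂ : i ≤ 0)
    (hext : ExtNe w i x h) : x = h := by
  by_contra hne
  obtain rfl | rfl | hi := show i = 0 ∨ i = w ∨ (w + 1 ≤ i ∧ i ≤ -1) by omega
  · exact (hh.2 x hx hne).1 hext
  · exact (hh.2 x hx hne).2 hext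
  · exact hh.1 x hx i hi.1 hi.2 hext

lemma isHomConfig_of_extOrthogonal {w : ℤ} (hw : w ≤ -1) {C : Set Arc}
    (hadm : ∀ c ∈ C, Adm w c) (hC : ExtOrthogonal w C)
    (hcov : ∀ z : Arc, Adm w z → ∃ x ∈ C, ∃ i : ℤ, w ≤ i ∧ i ≤ 0 ∧ ExtNe w i x z) :
    IsHomConfig w C := by
  refine ⟨hadm, fun h hh => ⟨isHomCompatible_of_mem hw hC, fun hcomp => ?_⟩⟩
  obtain ⟨x, hx, i, hi₁, hi₂, hext⟩ := hcov h hh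
  exact IsHomCompatible.eq_of_extNe hcomp hx hi₁ hi₂ hext ▸ hx

lemma IsLeftRiedtmann.isHomConfig {w : ℤ} (hw : w ≤ -1) {C : Set Arc}
    (hC : IsLeftRiedtmann w C) : IsHomConfig w C := by
  obtain ⟨hadm, horth, hcov⟩ := hC
  refine isHomConfig_of_extOrthogonal hw hadm horth fun z hz => ?_
  obtain ⟨x, hx, i, hi₁, hi₂, hext⟩ := hcov z hz
  exact ⟨x, hx, i, by omega, hi₂, hext⟩

lemma IsRightRiedtmann.isHomConfig {w : ℤ} (hw : w ≤ -1) {C : Set Arc}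
    (hC : IsRightRiedtmann w C) : IsHomConfig w C := by
  obtain ⟨hadm, horth, hcov⟩ := hC
  refine isHomConfig_of_extOrthogonal hw hadm horth fun z hz => ?_
  obtain ⟨x, hx, i, hi₁, hi₂, hext⟩ := hcov z hz
  exact ⟨x, hx, w - i, by omega, by omega, (extNe_iff_extNe_sub hw hz (hadm x hx) i).1 hext⟩

/-- Every left `|w|`-Riedtmann configuration is a `|w|`-Hom-configuration, and every
right `|w|`-Riedtmann configuration is a `|w|`-Hom-configuration. -/
theorem stmt9 (w : ℤ) (hw : w ≤ -1) :
    (∀ C : Set Arc, IsLeftRiedtmann w C → IsHomConfig w C) ∧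
    (∀ C : Set Arc, IsRightRiedtmann w C → IsHomConfig w C) :=
  ⟨fun _ hC => hC.isHomConfig hw, fun _ hC => hC.isHomConfig hw⟩

end SphericalArcs
end

section
/- Every |w|-Hom-configuration H is nonempty and contains an arc of minimum length, i.e. an arc (t,u) with t − u = |w|. -/
/-
A Hom-configuration is non-crossing: for crossing arcs some `Ext^i` with `w ≤ i ≤ 0` is nonzero.
If it contained no arc of minimal length `-w`, take a shortest arc `a ∈ H`, so of length at least
`1 - 2w`, and the minimal arc `h` whose lower endpoint is `a.2 + 1`. Any `x ∈ H` with
`Ext^i(x, h) ≠ 0` for some `w ≤ i ≤ 0` has an endpoint on `h`, hence strictly inside `a`; not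
crossing `a`, it would be shorter than `a`. So `h` passes the membership test and lies in `H`.
-/

/- Combinatorial model of the triangulated category `T_w` generated by a `w`-spherical
object (`w ≤ -1`), via `d`-admissible arcs of the ∞-gon, where `d = w - 1`,
`|d| = 1 - w`, `|w| = -w`. -/

namespace SphericalArcs

section Arcs

variable {w : ℤ}

lemma Adm.sub {a : Arc} (ha : Adm w a) (i : ℤ) : Adm w (a.1 - i, a.2 - i) := by
  simpa [Adm] using ha

lemma Adm.mul_kk {a : Arc} (ha : Adm w a) : (1 - w) * kk w a = a.1 - a.2 + 1 :=
  Int.mul_ediv_cancel' ha.2.2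

lemma kk_serre (a : Arc) : kk w (Serre w a) = kk w a := by
  simp [kk, Serre]

lemma adm_of_length_eq (hw : w ≤ -1) {a : Arc} (ha : a.1 - a.2 = -w) : Adm w a :=
  ⟨by omega, ha.ge, ⟨1, by rw [ha]; ring⟩⟩

lemma Adm.length_eq_or_ge (hw : w ≤ 0) {a : Arc} (ha : Adm w a) :
    a.1 - a.2 = -w ∨ 1 - 2 * w ≤ a.1 - a.2 := by
  have hk := ha.mul_kk
  rcases lt_trichotomy (kk w a) 1 with hk1 | hk1 | hk1
  · nlinarith [ha.1]
  · left; rw [hk1] at hk; omega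
  · right; nlinarith

/-- Write `X.1 - A.1 = ρ + (1 - w) j` with `0 ≤ ρ < 1 - w`; then `Σ^{-ρ} A ∈ F⁺(X)`. -/
theorem exists_extNe_of_crossing (hw : w ≤ 0) {A X : Arc} (hA : Adm w A) (hX : Adm w X)
    (h₁ : A.2 < X.2) (h₂ : X.2 < A.1) (h₃ : A.1 < X.1) :
    ∃ i ∈ Set.Icc w 0, ExtNe w i X A := by
  have hD : 0 < 1 - w := by omega
  set ρ := (X.1 - A.1) % (1 - w)
  set j := (X.1 - A.1) / (1 - w)
  have hρ₀ : 0 ≤ ρ := Int.emod_nonneg _ hD.ne'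
  have hρD : ρ < 1 - w := Int.emod_lt_of_pos _ hD
  have hj₀ : 0 ≤ j := Int.ediv_nonneg (by omega) hD.le
  have hdiv : X.1 - A.1 = ρ + (1 - w) * j := (Int.emod_add_mul_ediv _ _).symm
  have hρ_le : ρ ≤ X.2 - A.2 := by
    have hdvd : (1 - w) ∣ ρ - (X.2 - A.2) :=
      ⟨kk w X - kk w A - j, by linear_combination -hdiv - hX.mul_kk + hA.mul_kk⟩
    by_contra! hlt
    have := Int.le_of_dvd (by omega) hdvd
    omega
  have hj_lt : j + 1 ≤ kk w X := by
    have hdvd : (1 - w) ∣ A.1 - X.2 + 1 + ρ :=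
      ⟨kk w X - j, by linear_combination -hX.mul_kk - hdiv⟩
    have := Int.le_of_dvd (by omega) hdvd
    refine le_of_mul_le_mul_left ?_ hD
    linarith [hX.mul_kk]
  refine ⟨-ρ, ⟨by omega, by omega⟩, Or.inl ⟨hA.sub _, ⟨j, hj₀, by omega, ?_⟩, ?_⟩⟩
  · show A.1 - -ρ = X.1 + j * (w - 1)
    linarith
  · show A.2 - -ρ ≤ X.2
    omega

theorem endpoint_mem_Icc_of_extNe (hw : w ≤ 0) {x h : Arc} {i : ℤ} (hx : Adm w x)
    (hh : h.1 - h.2 = -w) (hi : i ∈ Set.Icc w 0) (hE : ExtNe w i x h) :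
    x.2 ∈ Set.Icc h.2 h.1 ∨ x.1 ∈ Set.Icc h.2 h.1 := by
  obtain ⟨hiw, hi0⟩ := hi
  have hjD {j : ℤ} (hj : j ≤ kk w x - 1) : j * (1 - w) ≤ x.1 - x.2 + w := by
    calc j * (1 - w) ≤ (kk w x - 1) * (1 - w) := mul_le_mul_of_nonneg_right hj (by omega)
      _ = x.1 - x.2 + w := by linear_combination hx.mul_kk
  rcases hE with ⟨-, ⟨j, -, hj, hc₁⟩, hc₂⟩ | ⟨-, ⟨j, -, hj, hc₂⟩, hc₁⟩
  · have := hjD hj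
    simp only at hc₁ hc₂
    left; constructor <;> linarith
  · have := hjD (kk_serre (w := w) x ▸ hj)
    simp only [Serre] at hc₁ hc₂
    right; constructor <;> linarith

theorem exists_shortest_arc {H : Set Arc} (hH : ∀ a ∈ H, a.2 ≤ a.1) (hne : H.Nonempty) :
    ∃ a ∈ H, ∀ x ∈ H, a.1 - a.2 ≤ x.1 - x.2 := by
  obtain ⟨a, ha, hmin⟩ :=
    (InvImage.wf (fun x : Arc => (x.1 - x.2).toNat) wellFounded_lt).has_min H hne
  refine ⟨a, ha, fun x hx => ?_⟩
  have hxa : ¬ (x.1 - x.2).toNat < (a.1 - a.2).toNat := hmin x hx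
  have := hH x hx
  have := hH a ha
  omega

end Arcs

namespace IsHomConfig

variable {w : ℤ} {H : Set Arc} (hH : IsHomConfig w H)
include hH

theorem mem_of_forall_not_extNe (hw : w ≤ 0) {h : Arc} (hh : Adm w h)
    (hext : ∀ x ∈ H, ∀ i ∈ Set.Icc w 0, ¬ ExtNe w i x h) : h ∈ H :=
  (hH.2 h hh).2
    ⟨fun x hx i hi₁ hi₂ => hext x hx i ⟨by omega, by omega⟩,
     fun x hx _ => ⟨hext x hx 0 ⟨hw, le_rfl⟩, hext x hx w ⟨le_rfl, hw⟩⟩⟩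

theorem not_extNe {x y : Arc} (hx : x ∈ H) (hy : y ∈ H) (hxy : x ≠ y) {i : ℤ}
    (hi : i ∈ Set.Icc w 0) : ¬ ExtNe w i x y := by
  obtain ⟨hmid, hends⟩ := (hH.2 y (hH.1 y hy)).1 hy
  obtain ⟨hiw, hi0⟩ := hi
  rcases (by omega : i = w ∨ i = 0 ∨ (w + 1 ≤ i ∧ i ≤ -1)) with rfl | rfl | ⟨hi₁, hi₂⟩
  · exact (hends x hx hxy).2
  · exact (hends x hx hxy).1
  · exact hmid x hx i hi₁ hi₂

theorem not_cross (hw : w ≤ 0) {a b : Arc} (ha : a ∈ H) (hb : b ∈ H) : ¬ Cross a b := by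
  rintro (⟨h₁, h₂, h₃⟩ | ⟨h₁, h₂, h₃⟩)
  · obtain ⟨i, hi, hE⟩ := exists_extNe_of_crossing hw (hH.1 a ha) (hH.1 b hb) h₁ h₂ h₃
    exact hH.not_extNe hb ha (by rintro rfl; omega) hi hE
  · obtain ⟨i, hi, hE⟩ := exists_extNe_of_crossing hw (hH.1 b hb) (hH.1 a ha) h₁ h₂ h₃
    exact hH.not_extNe ha hb (by rintro rfl; omega) hi hE

theorem length_lt_of_endpoint_mem_Ioo (hw : w ≤ 0) {a x : Arc} (ha : a ∈ H) (hx : x ∈ H)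
    (hend : x.2 ∈ Set.Ioo a.2 a.1 ∨ x.1 ∈ Set.Ioo a.2 a.1) : x.1 - x.2 < a.1 - a.2 := by
  have hcross := hH.not_cross hw ha hx
  have hxadm := (hH.1 x hx).1
  simp only [Cross, Set.mem_Ioo] at hcross hend
  omega

theorem nonempty (hw : w ≤ -1) : H.Nonempty := by
  by_contra hempty
  rw [Set.not_nonempty_iff_eq_empty] at hempty
  have h₀ : ((0 : ℤ), w) ∈ H :=
    hH.mem_of_forall_not_extNe (by omega) (adm_of_length_eq hw (by simp))
      (by simp [hempty])
  simp [hempty] at h₀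

end IsHomConfig

/-- Every `|w|`-Hom-configuration is nonempty and contains an arc of minimum length,
i.e. an arc `(t,u)` with `t - u = |w|`. -/
theorem stmt10 (w : ℤ) (hw : w ≤ -1) (H : Set Arc) (hH : IsHomConfig w H) :
    ∃ a ∈ H, a.1 - a.2 = -w := by
  by_contra! hnone
  obtain ⟨a, ha, hmin⟩ :=
    exists_shortest_arc (fun x hx => (hH.1 x hx).1.le) (hH.nonempty hw)
  have ha_long : 1 - 2 * w ≤ a.1 - a.2 :=
    ((hH.1 a ha).length_eq_or_ge (by omega)).resolve_left (hnone a ha)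
  set h : Arc := (a.2 - w + 1, a.2 + 1)
  have hh : h.1 - h.2 = -w := by simp only [h]; ring
  refine hnone h (hH.mem_of_forall_not_extNe (by omega) (adm_of_length_eq hw hh)
    fun x hx i hi hE => ?_) hh
  have hon_h := endpoint_mem_Icc_of_extNe (by omega) (hH.1 x hx) hh hi hE
  have hx_short := hH.length_lt_of_endpoint_mem_Ioo (by omega) ha hx (by
    simp only [h, Set.mem_Icc, Set.mem_Ioo] at hon_h ⊢
    omega)
  exact (hmin x hx).not_gt hx_short

end SphericalArcs
end

section
/- Let a = (t,u) be a d-admissible arc and let φ : ℤ \ [u,t] → ℤ be the map defined by φ(t+i) = i − 1 and φ(u−i) = −i for every integer i ≥ 1. Then φ is a bijection; the assignment (x,y) ↦ (φ(x), φ(y)) is a bijection from the set of d-admissible arcs both of whose endpoints lie outside the closed interval [u,t] onto the set of all d-admissible arcs; and for any two arcs b, b' in its domain, Hom(b, b') ≠ 0 if and only if Hom((φ×φ)(b), (φ×φ)(b')) ≠ 0. -/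
/- Combinatorial model of the triangulated category `T_w` generated by a `w`-spherical
object (`w ≤ -1`), via `d`-admissible arcs of the ∞-gon, where `d = w - 1`,
`|d| = 1 - w`, `|w| = -w`. -/

namespace SphericalArcs

/-- The map `φ : ℤ \ [u,t] → ℤ`, `φ(t+i) = i - 1`, `φ(u-i) = -i` for `i ≥ 1`. -/
def phi (a : Arc) (z : ℤ) : ℤ := if a.1 < z then z - a.1 - 1 else z - a.2

/-!
On `ℤ \ [u,t]` the map `φ` is strictly increasing and `φ z ≡ z - u` modulo `t - u + 1`, hence
modulo `|d|`. Admissibility and non-vanishing of `Hom` can be rewritten purely in terms of the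
order of endpoints and of their residues modulo `|d|`: for `b = (t', u')`, both `F⁺(b)` and
`F⁻(S b)` move one endpoint through the integers of `(u', t']` congruent to `t'`, and for an
admissible target the Serre-shifted bound `x ≥ t' - w` collapses to `x > t'`. Such conditions
are transported by `φ`.
-/

theorem adm_iff (w : ℤ) (b : Arc) : Adm w b ↔ b.2 < b.1 ∧ (1 - w) ∣ b.1 - b.2 + 1 := by
  refine ⟨fun ⟨hlt, _, hdvd⟩ => ⟨hlt, hdvd⟩, fun ⟨hlt, hdvd⟩ => ⟨hlt, ?_, hdvd⟩⟩
  rcases le_or_gt w 0 with hw | hw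
  · have := Int.le_of_dvd (by omega) hdvd
    omega
  · omega

theorem exists_index_add_mul_iff {w t u x : ℤ} (hw : w ≤ -1) (h : (1 - w) ∣ t - u + 1) :
    (∃ i : ℤ, 0 ≤ i ∧ i ≤ (t - u + 1) / (1 - w) - 1 ∧ x = t + i * (w - 1)) ↔
      (1 - w) ∣ t - x ∧ u < x ∧ x ≤ t := by
  obtain ⟨K, hK⟩ := h
  rw [hK, Int.mul_ediv_cancel_left _ (by omega)]
  constructor
  · rintro ⟨i, hi0, hiK, rfl⟩
    exact ⟨⟨i, by ring⟩, by nlinarith, by nlinarith⟩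
  · rintro ⟨⟨i, hi⟩, hux, hxt⟩
    exact ⟨i, by nlinarith, by nlinarith, by linarith⟩

-- Reindexing `i ↦ k - 1 - i`: the lower endpoints of `F⁻(S b)` sweep the same window as the
-- upper endpoints of `F⁺(b)`.
theorem exists_index_sub_mul_iff {w t u y : ℤ} (hw : w ≤ -1) (h : (1 - w) ∣ t - u + 1) :
    (∃ i : ℤ, 0 ≤ i ∧ i ≤ (t - u + 1) / (1 - w) - 1 ∧ y = u - w - i * (w - 1)) ↔
      (1 - w) ∣ t - y ∧ u < y ∧ y ≤ t := by
  obtain ⟨K, hK⟩ := h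
  rw [hK, Int.mul_ediv_cancel_left _ (by omega)]
  constructor
  · rintro ⟨i, hi0, hiK, rfl⟩
    exact ⟨⟨K - 1 - i, by linear_combination hK⟩, by nlinarith, by nlinarith⟩
  · rintro ⟨⟨j, hj⟩, huy, hyt⟩
    exact ⟨K - 1 - j, by nlinarith, by nlinarith, by linear_combination hK - hj⟩

theorem lt_iff_sub_le_of_dvd {w x y : ℤ} (hw : w ≤ -1) (h : (1 - w) ∣ y - x + 1) :
    x < y ↔ x - w ≤ y := by
  refine ⟨fun hxy => ?_, fun _ => by omega⟩
  have := Int.le_of_dvd (by omega) h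
  omega

theorem fplus_iff {w : ℤ} (hw : w ≤ -1) {b : Arc} (hb : Adm w b) (c : Arc) :
    Fplus w b c ↔ Adm w c ∧ ((1 - w) ∣ b.1 - c.1 ∧ b.2 < c.1 ∧ c.1 ≤ b.1) ∧ c.2 ≤ b.2 := by
  rw [Fplus, kk, exists_index_add_mul_iff hw hb.2.2]

theorem fminus_serre_iff {w : ℤ} (hw : w ≤ -1) {b : Arc} (hb : Adm w b) (c : Arc) :
    Fminus w (Serre w b) c ↔
      Adm w c ∧ ((1 - w) ∣ b.1 - c.2 ∧ b.2 < c.2 ∧ c.2 ≤ b.1) ∧ b.1 < c.1 := by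
  rw [Fminus, kk, Serre, sub_sub_sub_cancel_right, exists_index_sub_mul_iff hw hb.2.2]
  refine and_congr_right fun hc => and_congr_right fun ⟨hdvd, _⟩ => ?_
  refine (lt_iff_sub_le_of_dvd hw ?_).symm
  rw [show c.1 - b.1 + 1 = c.1 - c.2 + 1 - (b.1 - c.2) by ring]
  exact dvd_sub hc.2.2 hdvd

theorem strictMonoOn_phi (a : Arc) : StrictMonoOn (phi a) {z : ℤ | z < a.2 ∨ a.1 < z} := by
  intro x hx y hy hxy
  unfold phi
  split_ifs <;> grind

theorem bijOn_phi {a : Arc} (ha : a.2 ≤ a.1) :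
    Set.BijOn (phi a) {z : ℤ | z < a.2 ∨ a.1 < z} Set.univ := by
  refine ⟨Set.mapsTo_univ _ _, (strictMonoOn_phi a).injOn, fun m _ => ?_⟩
  rcases le_or_gt 0 m with hm | hm
  · exact ⟨a.1 + m + 1, by grind, by unfold phi; split_ifs <;> omega⟩
  · exact ⟨a.2 + m, by grind, by unfold phi; split_ifs <;> omega⟩

theorem phi_modEq (a : Arc) (z : ℤ) : phi a z ≡ z - a.2 [ZMOD a.1 - a.2 + 1] := by
  unfold phi
  split_ifs
  · exact Int.modEq_iff_dvd.mpr ⟨1, by ring⟩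
  · rfl

theorem phi_sub_phi_modEq {a : Arc} {n : ℤ} (hn : n ∣ a.1 - a.2 + 1) (x y : ℤ) :
    phi a x - phi a y ≡ x - y [ZMOD n] := by
  have h := ((phi_modEq a x).sub (phi_modEq a y)).of_dvd hn
  rwa [sub_sub_sub_cancel_right] at h

theorem adm_phi_iff {w : ℤ} {a : Arc} (hn : (1 - w) ∣ a.1 - a.2 + 1) {b : Arc}
    (h₁ : b.1 < a.2 ∨ a.1 < b.1) (h₂ : b.2 < a.2 ∨ a.1 < b.2) :
    Adm w (phi a b.1, phi a b.2) ↔ Adm w b := by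
  rw [adm_iff, adm_iff]
  exact and_congr ((strictMonoOn_phi a).lt_iff_lt h₂ h₁)
    ((phi_sub_phi_modEq hn b.1 b.2).add_right 1).dvd_iff

theorem bijOn_phi_arc {w : ℤ} {a : Arc} (ha : a.2 ≤ a.1) (hn : (1 - w) ∣ a.1 - a.2 + 1) :
    Set.BijOn (fun b : Arc => ((phi a b.1, phi a b.2) : Arc))
      {b : Arc | Adm w b ∧ (b.1 < a.2 ∨ a.1 < b.1) ∧ (b.2 < a.2 ∨ a.1 < b.2)}
      {b : Arc | Adm w b} := by
  have hφ := bijOn_phi ha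
  refine ⟨fun b ⟨hb, h₁, h₂⟩ => (adm_phi_iff hn h₁ h₂).mpr hb, ?_, ?_⟩
  · rintro b ⟨-, hb⟩ c ⟨-, hc⟩ he
    exact hφ.injOn.prodMap hφ.injOn hb hc he
  · intro c hc
    obtain ⟨b, hb, rfl⟩ :=
      hφ.surjOn.prodMap hφ.surjOn (show c ∈ Set.univ ×ˢ Set.univ from ⟨trivial, trivial⟩)
    exact ⟨b, ⟨(adm_phi_iff hn hb.1 hb.2).mp hc, hb⟩, rfl⟩

theorem homNe_phi_iff {w : ℤ} (hw : w ≤ -1) {a : Arc} (hn : (1 - w) ∣ a.1 - a.2 + 1)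
    {b c : Arc} (hb : Adm w b) (hb₁ : b.1 < a.2 ∨ a.1 < b.1) (hb₂ : b.2 < a.2 ∨ a.1 < b.2)
    (hc₁ : c.1 < a.2 ∨ a.1 < c.1) (hc₂ : c.2 < a.2 ∨ a.1 < c.2) :
    HomNe w (phi a b.1, phi a b.2) (phi a c.1, phi a c.2) ↔ HomNe w b c := by
  have hφ := strictMonoOn_phi a
  rw [HomNe, HomNe, fplus_iff hw hb, fminus_serre_iff hw hb,
    fplus_iff hw ((adm_phi_iff hn hb₁ hb₂).mpr hb),
    fminus_serre_iff hw ((adm_phi_iff hn hb₁ hb₂).mpr hb)]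
  dsimp only
  rw [adm_phi_iff hn hc₁ hc₂, (phi_sub_phi_modEq hn b.1 c.1).dvd_iff,
    (phi_sub_phi_modEq hn b.1 c.2).dvd_iff, hφ.lt_iff_lt hb₂ hc₁, hφ.le_iff_le hc₁ hb₁,
    hφ.le_iff_le hc₂ hb₂, hφ.lt_iff_lt hb₂ hc₂, hφ.le_iff_le hc₂ hb₁, hφ.lt_iff_lt hb₁ hc₁]

/-- Theorem 5.1 (second part): `φ` is a bijection from `ℤ \ [u,t]` to `ℤ`; the induced
map on arcs is a bijection from the `d`-admissible arcs with both endpoints outside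
`[u,t]` onto all `d`-admissible arcs; and it preserves non-vanishing of `Hom`. -/
theorem stmt12 (w : ℤ) (hw : w ≤ -1) (a : Arc) (ha : Adm w a) :
    Set.BijOn (phi a) {z : ℤ | z < a.2 ∨ a.1 < z} Set.univ ∧
    Set.BijOn (fun b : Arc => ((phi a b.1, phi a b.2) : Arc))
      {b : Arc | Adm w b ∧ (b.1 < a.2 ∨ a.1 < b.1) ∧ (b.2 < a.2 ∨ a.1 < b.2)}
      {b : Arc | Adm w b} ∧
    ∀ b ∈ {b : Arc | Adm w b ∧ (b.1 < a.2 ∨ a.1 < b.1) ∧ (b.2 < a.2 ∨ a.1 < b.2)},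
      ∀ b' ∈ {b : Arc | Adm w b ∧ (b.1 < a.2 ∨ a.1 < b.1) ∧ (b.2 < a.2 ∨ a.1 < b.2)},
        (HomNe w b b' ↔ HomNe w (phi a b.1, phi a b.2) (phi a b'.1, phi a b'.2)) := by
  obtain ⟨hlt, -, hn⟩ := ha
  refine ⟨bijOn_phi hlt.le, bijOn_phi_arc hlt.le hn, ?_⟩
  rintro b ⟨hb, hb₁, hb₂⟩ c ⟨-, hc₁, hc₂⟩
  exact (homNe_phi_iff hw hn hb hb₁ hb₂ hc₁ hc₂).symm

end SphericalArcs
end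

section
/- In the quiver Γ(n,m) whose vertices are the (m+1)-diagonals of the N-gon, with an arrow {i,j} → {i, j+(m+1)} (indices taken modulo N) whenever both pairs are (m+1)-diagonals, the map τ{i,j} = {i−(m+1), j−(m+1)} is a well-defined bijection of the vertex set onto itself, and (Γ(n,m), τ) is a stable translation quiver: for all vertices D, D', there is an arrow D → D' if and only if there is an arrow τ(D') → D. -/
namespace PolygonQuiver

abbrev NN (n m : ℕ) : ℕ := (n + 1) * (m + 1) - 2

def IsDiag (n m : ℕ) (p : Sym2 (ZMod (NN n m))) : Prop :=
  ∃ i j : ZMod (NN n m), p = s(i, j) ∧ i ≠ j ∧ (m + 1) ∣ ((j - i).val + 1)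

def HasArrow (n m : ℕ) (p q : Sym2 (ZMod (NN n m))) : Prop :=
  IsDiag n m p ∧ IsDiag n m q ∧
  ∃ i j : ZMod (NN n m), p = s(i, j) ∧ q = s(i, j + (m + 1))

def tr (n m : ℕ) (p : Sym2 (ZMod (NN n m))) : Sym2 (ZMod (NN n m)) :=
  Sym2.map (fun z => z - (m + 1)) p

variable {n m : ℕ}

lemma IsDiag.map {p : Sym2 (ZMod (NN n m))} (hp : IsDiag n m p)
    {f : ZMod (NN n m) → ZMod (NN n m)} (hf : ∀ x y, f y - f x = y - x) : IsDiag n m (Sym2.map f p) := by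
  obtain ⟨i, j, rfl, hij, hdvd⟩ := hp
  refine ⟨f i, f j, rfl, fun h => hij ?_, by rwa [hf]⟩
  rw [← sub_eq_zero, ← hf, h, sub_self]

lemma IsDiag.tr {p : Sym2 (ZMod (NN n m))} (hp : IsDiag n m p) : IsDiag n m (tr n m p) :=
  hp.map fun x y => sub_sub_sub_cancel_right y x _

lemma tr_pair (i j : ZMod (NN n m)) : tr n m s(i, j) = s(i - (m + 1), j - (m + 1)) := rfl

lemma tr_injective : Function.Injective (tr n m) :=
  Sym2.map.injective (sub_left_injective (b := (m + 1 : ZMod (NN n m))))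

lemma tr_map_add (p : Sym2 (ZMod (NN n m))) : tr n m (Sym2.map (· + (m + 1)) p) = p := by
  simp only [tr, Sym2.map_map, Function.comp_def, add_sub_cancel_right, Sym2.map_id', id_eq]

lemma tr_eq_pair_iff {q : Sym2 (ZMod (NN n m))} {i j : ZMod (NN n m)} :
    tr n m q = s(i, j) ↔ q = s(i + (m + 1), j + (m + 1)) := by
  conv_rhs => rw [← tr_injective.eq_iff, tr_pair, add_sub_cancel_right, add_sub_cancel_right]

theorem bijOn_tr : Set.BijOn (tr n m) {p | IsDiag n m p} {p | IsDiag n m p} :=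
  ⟨fun _ hp => hp.tr, tr_injective.injOn,
    fun q hq => ⟨_, IsDiag.map hq fun x y => add_sub_add_right_eq_sub y x _, tr_map_add q⟩⟩

/- An arrow `{i, j} → {i, j + (m+1)}` is, seen from the fixed endpoint `j` instead of `i`, the
arrow `τ{i, j + (m+1)} = {j, i - (m+1)} → {j, i}`. -/
theorem hasArrow_iff_hasArrow_tr {p q : Sym2 (ZMod (NN n m))} (hp : IsDiag n m p)
    (hq : IsDiag n m q) : HasArrow n m p q ↔ HasArrow n m (tr n m q) p := by
  constructor
  · rintro ⟨-, -, i, j, rfl, rfl⟩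
    refine ⟨hq.tr, hp, j, i - (m + 1), ?_, by rw [sub_add_cancel, Sym2.eq_swap]⟩
    rw [tr_pair, add_sub_cancel_right, Sym2.eq_swap]
  · rintro ⟨-, -, i, j, htq, rfl⟩
    exact ⟨hp, hq, j + (m + 1), i, Sym2.eq_swap, by rw [tr_eq_pair_iff.mp htq, Sym2.eq_swap]⟩

theorem stmt13_general (n m : ℕ) :
    Set.BijOn (tr n m) {p | IsDiag n m p} {p | IsDiag n m p} ∧
    (∀ p q : Sym2 (ZMod (NN n m)), IsDiag n m p → IsDiag n m q →
      (HasArrow n m p q ↔ HasArrow n m (tr n m q) p)) :=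
  ⟨bijOn_tr, fun _ _ => hasArrow_iff_hasArrow_tr⟩

/-- Lemma 6.1: `τ` is a well-defined bijection of the vertex set of `Γ(n,m)` onto
itself, and `(Γ(n,m), τ)` is a stable translation quiver: for all vertices `D, D'`,
there is an arrow `D → D'` iff there is an arrow `τ(D') → D`. -/
theorem stmt13 (n m : ℕ) (hn : 1 ≤ n) (hm : 1 ≤ m) :
    Set.BijOn (tr n m) {p | IsDiag n m p} {p | IsDiag n m p} ∧
    (∀ p q : Sym2 (ZMod (NN n m)), IsDiag n m p → IsDiag n m q →
      (HasArrow n m p q ↔ HasArrow n m (tr n m q) p)) :=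
  stmt13_general n m

end PolygonQuiver
end

section
/- A set of pairwise noncrossing (m+1)-diagonals of the regular N-gon, no two of which share a vertex, is maximal with respect to these two properties if and only if it has exactly n elements. -/
/-!
Read the vertices as `1, …, N` on a line. A noncrossing matching by `(m+1)`-diagonals is then a
family of nested or disjoint intervals with distinct endpoints, each with a multiple of `m+1`
points. A shortest diagonal `d`, with `k(m+1)` points, has no vertex of another diagonal inside
it, so deleting `d` with its points leaves a noncrossing matching of the `((n-k+1)(m+1)-2)`-gon;
by induction on `n` there are at most `n` diagonals. With fewer than `n`, a diagonal can be
added: inside `d` if `k ≥ 2`, and otherwise by lifting one that can be added in the smaller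
polygon. So maximal matchings are exactly those with `n` diagonals.
-/

/- `(m+1)`-diagonals of a regular `N`-gon with vertices labelled `1, …, N`
clockwise, `N = (n+1)(m+1) - 2`. -/

namespace PolygonDiagonals

/-- `p = (i,j)` with `1 ≤ i < j ≤ N` is an `(m+1)`-diagonal: `m+1 ∣ j - i + 1`. -/
def IsDiagL (N m : ℤ) (p : ℤ × ℤ) : Prop :=
  1 ≤ p.1 ∧ p.1 < p.2 ∧ p.2 ≤ N ∧ (m + 1) ∣ (p.2 - p.1 + 1)

/-- Two diagonals cross iff their endpoints strictly interleave around the circle. -/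
def CrossD (p q : ℤ × ℤ) : Prop :=
  (p.1 < q.1 ∧ q.1 < p.2 ∧ p.2 < q.2) ∨ (q.1 < p.1 ∧ p.1 < q.2 ∧ q.2 < p.2)

/-- Two diagonals share a vertex. -/
def ShareV (p q : ℤ × ℤ) : Prop :=
  p.1 = q.1 ∨ p.1 = q.2 ∨ p.2 = q.1 ∨ p.2 = q.2

def Compatible (p q : ℤ × ℤ) : Prop := ¬ CrossD p q ∧ ¬ ShareV p q

def IsNoncrossingMatching (N m : ℤ) (S : Set (ℤ × ℤ)) : Prop :=
  (∀ p ∈ S, IsDiagL N m p) ∧ S.Pairwise Compatible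

lemma Compatible.symm {p q : ℤ × ℤ} (h : Compatible p q) : Compatible q p := by
  unfold Compatible CrossD ShareV at *
  tauto

lemma Compatible.ne {p q : ℤ × ℤ} (h : Compatible p q) : p ≠ q := by
  rintro rfl
  exact h.2 (Or.inl rfl)

lemma compatible_map_iff {f : ℤ → ℤ} (hf : StrictMono f) {p q : ℤ × ℤ} :
    Compatible (Prod.map f f p) (Prod.map f f q) ↔ Compatible p q := by
  simp only [Compatible, CrossD, ShareV, Prod.map_fst, Prod.map_snd, hf.lt_iff_lt,
    hf.injective.eq_iff]

lemma IsNoncrossingMatching.finite {N m : ℤ} {S : Set (ℤ × ℤ)}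
    (hS : IsNoncrossingMatching N m S) : S.Finite := by
  refine ((Set.finite_Icc 1 N).prod (Set.finite_Icc 1 N)).subset fun p hp => ?_
  obtain ⟨h1, h2, h3, -⟩ := hS.1 p hp
  exact ⟨⟨h1, by omega⟩, ⟨by omega, h3⟩⟩

lemma IsNoncrossingMatching.insert {N m : ℤ} {S : Set (ℤ × ℤ)} {e : ℤ × ℤ}
    (hS : IsNoncrossingMatching N m S) (he : IsDiagL N m e) (hc : ∀ q ∈ S, Compatible e q) :
    IsNoncrossingMatching N m (insert e S) :=
  ⟨Set.forall_mem_insert.2 ⟨he, hS.1⟩,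
    Set.pairwise_insert.2 ⟨hS.2, fun q hq _ => ⟨hc q hq, (hc q hq).symm⟩⟩⟩

/-- Relabelling of the vertices that opens a gap of `L` new vertices `a, …, a + L - 1`. -/
def openGap (a L x : ℤ) : ℤ := if x < a then x else x + L

def gapMap (a L : ℤ) : ℤ × ℤ → ℤ × ℤ := Prod.map (openGap a L) (openGap a L)

section Gap

variable {a L : ℤ}

lemma openGap_strictMono (hL : 0 ≤ L) : StrictMono (openGap a L) := by
  intro x y hxy
  unfold openGap
  split_ifs <;> omega

lemma openGap_lt_or_le (x : ℤ) : openGap a L x < a ∨ a + L ≤ openGap a L x := by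
  unfold openGap
  split_ifs <;> omega

lemma mem_range_openGap {x : ℤ} :
    x ∈ Set.range (openGap a L) ↔ x < a ∨ a + L ≤ x := by
  refine ⟨fun ⟨y, hy⟩ => hy ▸ openGap_lt_or_le y, fun hx => ?_⟩
  rcases hx with hx | hx
  · exact ⟨x, if_pos hx⟩
  · exact ⟨x - L, by unfold openGap; split_ifs <;> omega⟩

lemma gapMap_injective (hL : 0 ≤ L) : Function.Injective (gapMap a L) :=
  (openGap_strictMono hL).injective.prodMap (openGap_strictMono hL).injective

lemma compatible_gapMap_iff (hL : 0 ≤ L) {p q : ℤ × ℤ} :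
    Compatible (gapMap a L p) (gapMap a L q) ↔ Compatible p q :=
  compatible_map_iff (openGap_strictMono hL)

lemma compatible_gapMap_of_mem_gap {e : ℤ × ℤ} (h1 : a ≤ e.1 ∧ e.1 < a + L)
    (h2 : a ≤ e.2 ∧ e.2 < a + L) (q : ℤ × ℤ) : Compatible e (gapMap a L q) := by
  have := openGap_lt_or_le (a := a) (L := L) q.1
  have := openGap_lt_or_le (a := a) (L := L) q.2
  simp only [Compatible, CrossD, ShareV, gapMap, Prod.map_fst, Prod.map_snd]
  omega

lemma isDiagL_gapMap_iff {N m : ℤ} (ha : 1 ≤ a) (haN : a + L ≤ N + 1) (hL : 0 ≤ L)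
    (hmL : m + 1 ∣ L) {p : ℤ × ℤ} : IsDiagL N m (gapMap a L p) ↔ IsDiagL (N - L) m p := by
  obtain ⟨x, y⟩ := p
  simp only [IsDiagL, gapMap, Prod.map_fst, Prod.map_snd, openGap]
  split_ifs with hx hy hy
  · constructor <;> rintro ⟨h1, h2, h3, h4⟩ <;> exact ⟨h1, h2, by omega, h4⟩
  · have e : y + L - x + 1 = y - x + 1 + L := by ring
    rw [e, dvd_add_left hmL]
    constructor <;> rintro ⟨h1, h2, h3, h4⟩ <;> exact ⟨h1, by omega, by omega, h4⟩
  · constructor <;> rintro ⟨h1, h2, h3, h4⟩ <;> omega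
  · have e : y + L - (x + L) + 1 = y - x + 1 := by ring
    rw [e]
    constructor <;> rintro ⟨h1, h2, h3, h4⟩ <;> exact ⟨by omega, by omega, by omega, h4⟩

end Gap

/-- Another diagonal with a vertex on a shortest diagonal `d` would be nested in `d`, hence
shorter; so `s` is `d` together with the image of a matching `s'` of the polygon without the
vertices `d.1, …, d.2`. -/
lemma IsNoncrossingMatching.exists_erase_eq_image_gapMap {N m : ℤ} {s : Finset (ℤ × ℤ)}
    (hs : IsNoncrossingMatching N m s) (hne : s.Nonempty) :
    ∃ d ∈ s, ∃ s' : Finset (ℤ × ℤ), IsNoncrossingMatching (N - (d.2 - d.1 + 1)) m s' ∧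
      s.erase d = s'.image (gapMap d.1 (d.2 - d.1 + 1)) ∧ s'.card + 1 = s.card := by
  obtain ⟨d, hd, hmin⟩ := s.exists_min_image (fun p => p.2 - p.1) hne
  obtain ⟨hd1, hd2, hdN, hdm⟩ := hs.1 d hd
  set L := d.2 - d.1 + 1
  have hL : 0 ≤ L := by omega
  have hinj := gapMap_injective (a := d.1) hL
  have hrange : ∀ q ∈ s.erase d, q ∈ Set.range (gapMap d.1 L) := by
    intro q hq
    obtain ⟨hqd, hqs⟩ := Finset.mem_erase.1 hq
    obtain ⟨hc, hsh⟩ := hs.2 hqs hd hqd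
    obtain ⟨hq1, hq2, -, -⟩ := hs.1 q hqs
    have := hmin q hqs
    simp only [CrossD, ShareV] at hc hsh
    simp only [gapMap, Set.range_prodMap, Set.mem_prod, mem_range_openGap]
    omega
  classical
  have herase : s.erase d = ((s.erase d).preimage _ hinj.injOn).image (gapMap d.1 L) := by
    rw [Finset.image_preimage, Finset.filter_true_of_mem hrange]
  refine ⟨d, hd, (s.erase d).preimage _ hinj.injOn, ⟨fun p hp => ?_, fun p hp q hq hpq => ?_⟩,
    herase, ?_⟩
  · rw [Finset.coe_preimage] at hp
    exact (isDiagL_gapMap_iff (by omega) (by omega) hL hdm).1 (hs.1 _ (Finset.mem_of_mem_erase hp))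
  · rw [Finset.coe_preimage] at hp hq
    exact (compatible_gapMap_iff hL).1
      (hs.2 (Finset.mem_of_mem_erase hp) (Finset.mem_of_mem_erase hq) (hinj.ne hpq))
  · rw [← Finset.card_image_of_injective _ hinj, ← herase, Finset.card_erase_add_one hd]

theorem IsNoncrossingMatching.card_le {n m : ℕ} {N : ℤ} (hN : N = (n + 1) * (m + 1) - 2)
    {s : Finset (ℤ × ℤ)} (hs : IsNoncrossingMatching N m s) : s.card ≤ n := by
  induction n using Nat.strong_induction_on generalizing N s with
  | _ n ih =>
  rcases s.eq_empty_or_nonempty with rfl | hne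
  · simp
  obtain ⟨d, hd, s', hs', herase, hcard'⟩ := hs.exists_erase_eq_image_gapMap hne
  obtain ⟨hd1, hd2, hdN, k, hk⟩ := hs.1 d hd
  have hk1 : 1 ≤ k := by nlinarith
  lift k to ℕ using (by omega)
  have hkn : k ≤ n := by exact_mod_cast (show (k : ℤ) ≤ n by nlinarith)
  have hs'card := ih (n - k) (by omega) (by rw [hk, hN]; push_cast [hkn]; ring) hs'
  omega

theorem IsNoncrossingMatching.exists_compatible_of_card_lt {n m : ℕ} (hm : 1 ≤ m) {N : ℤ}
    (hN : N = (n + 1) * (m + 1) - 2) {s : Finset (ℤ × ℤ)} (hs : IsNoncrossingMatching N m s)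
    (hcard : s.card < n) : ∃ e, IsDiagL N m e ∧ ∀ q ∈ s, Compatible e q := by
  induction n using Nat.strong_induction_on generalizing N s with
  | _ n ih =>
  have hm' : (1 : ℤ) ≤ m := by exact_mod_cast hm
  rcases s.eq_empty_or_nonempty with rfl | hne
  · have hn : (1 : ℤ) ≤ n := by exact_mod_cast hcard
    exact ⟨(1, m + 1), ⟨le_rfl, by omega, by nlinarith, ⟨1, by ring⟩⟩, by simp⟩
  obtain ⟨d, hd, s', hs', herase, hcard'⟩ := hs.exists_erase_eq_image_gapMap hne
  obtain ⟨hd1, hd2, hdN, k, hk⟩ := hs.1 d hd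
  have hk1 : 1 ≤ k := by nlinarith
  have hcomp : ∀ e, Compatible e d → (∀ q ∈ s', Compatible e (gapMap d.1 (d.2 - d.1 + 1) q)) →
      ∀ q ∈ s, Compatible e q := by
    intro e hed he q hq
    rcases eq_or_ne q d with rfl | hqd
    · exact hed
    · obtain ⟨q', hq', rfl⟩ := Finset.mem_image.1 (herase ▸ Finset.mem_erase.2 ⟨hqd, hq⟩)
      exact he q' hq'
  rcases lt_or_eq_of_le hk1 with hk2 | rfl
  · have hlong : d.1 + (m + 1) < d.2 := by nlinarith
    refine ⟨(d.1 + 1, d.1 + (m + 1)), ⟨by omega, by omega, by omega, ⟨1, by ring⟩⟩,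
      hcomp _ ?_ fun q _ => compatible_gapMap_of_mem_gap ⟨?_, ?_⟩ ⟨?_, ?_⟩ q⟩ <;>
      simp only [Compatible, CrossD, ShareV] <;> omega
  · have hL : d.2 - d.1 + 1 = m + 1 := by rw [hk, mul_one]
    obtain ⟨e', he', hce'⟩ := ih (n - 1) (by omega)
      (by rw [hL, hN]; push_cast [show 1 ≤ n by omega]; ring) hs' (by omega)
    refine ⟨gapMap d.1 (d.2 - d.1 + 1) e',
      (isDiagL_gapMap_iff (by omega) (by omega) (by omega) ⟨1, hk⟩).2 he', hcomp _ ?_ ?_⟩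
    · exact (compatible_gapMap_of_mem_gap ⟨le_rfl, by omega⟩ ⟨by omega, by omega⟩ e').symm
    · exact fun q hq => (compatible_gapMap_iff (by omega)).2 (hce' q hq)

theorem stmt14_general (n m : ℕ) (hm : 1 ≤ m) (N : ℤ)
    (hN : N = (n + 1) * (m + 1) - 2)
    (S : Set (ℤ × ℤ)) (hSd : ∀ p ∈ S, IsDiagL N m p)
    (hS : ∀ p ∈ S, ∀ q ∈ S, p ≠ q → ¬ CrossD p q ∧ ¬ ShareV p q) :
    (∀ T : Set (ℤ × ℤ), S ⊆ T → (∀ p ∈ T, IsDiagL N m p) →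
        (∀ p ∈ T, ∀ q ∈ T, p ≠ q → ¬ CrossD p q ∧ ¬ ShareV p q) → T = S) ↔
      (S.Finite ∧ S.ncard = n) := by
  have hSm : IsNoncrossingMatching N m S := ⟨hSd, hS⟩
  obtain ⟨s, rfl⟩ := hSm.finite.exists_finset_coe
  rw [Set.ncard_coe_finset]
  constructor
  · intro hmax
    refine ⟨s.finite_toSet, (hSm.card_le hN).eq_or_lt.resolve_right fun hlt => ?_⟩
    obtain ⟨e, he, hes⟩ := hSm.exists_compatible_of_card_lt hm hN hlt
    have hins := hSm.insert he hes
    have heq := hmax _ (Set.subset_insert e _) hins.1 hins.2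
    have hes' : e ∈ (s : Set (ℤ × ℤ)) := heq ▸ Set.mem_insert e _
    exact (hes e hes').ne rfl
  · rintro ⟨-, hcard⟩ T hsT hTd hT
    have hTm : IsNoncrossingMatching N m T := ⟨hTd, hT⟩
    obtain ⟨t, rfl⟩ := hTm.finite.exists_finset_coe
    exact_mod_cast (Finset.eq_of_subset_of_card_le (Finset.coe_subset.1 hsT)
      (hcard ▸ hTm.card_le hN)).symm

/-- A set of pairwise noncrossing `(m+1)`-diagonals of the regular `N`-gon, no two of
which share a vertex, is maximal with respect to these two properties iff it has
exactly `n` elements. -/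
theorem stmt14 (n m : ℕ) (hn : 1 ≤ n) (hm : 1 ≤ m) (N : ℤ)
    (hN : N = (n + 1) * (m + 1) - 2)
    (S : Set (ℤ × ℤ)) (hSd : ∀ p ∈ S, IsDiagL N m p)
    (hS : ∀ p ∈ S, ∀ q ∈ S, p ≠ q → ¬ CrossD p q ∧ ¬ ShareV p q) :
    (∀ T : Set (ℤ × ℤ), S ⊆ T → (∀ p ∈ T, IsDiagL N m p) →
        (∀ p ∈ T, ∀ q ∈ T, p ≠ q → ¬ CrossD p q ∧ ¬ ShareV p q) → T = S) ↔
      (S.Finite ∧ S.ncard = n) :=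
  stmt14_general n m hm N hN S hSd hS

end PolygonDiagonals
end

section
/- Let w = −m and d = −(m+1). The map G sending an (m+1)-diagonal {i,j} with 1 ≤ i < j ≤ N to the pair (N+1−i, N+1−j) is a bijection from the set of (m+1)-diagonals of the regular N-gon onto the set of d-admissible arcs (x,y) with 0 < y < x < N+1; moreover, two diagonals cross (respectively, share a vertex) if and only if their image arcs cross (respectively, share a vertex). -/
/-!
The map `G` is the reflection `x ↦ N + 1 - x` applied to both endpoints. It is an
involution that reverses the order of `ℤ`, so it preserves the length `j - i + 1` of an
arc (hence the divisibility conditions), swaps the order of the endpoints, and exchanges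
the two interleaving patterns `i < i' < j < j'` and `i' < i < j' < j`.
-/

namespace PolygonDiagonals

/-- `(t,u)` is a `d`-admissible arc for `d = w - 1`:
`t > u`, `t - u ≥ |d| - 1 = -w` and `(1 - w) ∣ (t - u + 1)`. -/
def Adm (w : ℤ) (a : ℤ × ℤ) : Prop :=
  a.2 < a.1 ∧ -w ≤ a.1 - a.2 ∧ (1 - w) ∣ (a.1 - a.2 + 1)

/-- Arcs `(t,u)` and `(t',u')` cross if `u < u' < t < t'` or `u' < u < t' < t`. -/
def Cross (a b : ℤ × ℤ) : Prop :=
  (a.2 < b.2 ∧ b.2 < a.1 ∧ a.1 < b.1) ∨ (b.2 < a.2 ∧ a.2 < b.1 ∧ b.1 < a.1)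

/-- Arcs share a vertex if `{t,u} ∩ {t',u'} ≠ ∅`. -/
def ShareVertex (a b : ℤ × ℤ) : Prop :=
  a.1 = b.1 ∨ a.1 = b.2 ∨ a.2 = b.1 ∨ a.2 = b.2

def reflect (N : ℤ) (p : ℤ × ℤ) : ℤ × ℤ := (N + 1 - p.1, N + 1 - p.2)

@[simp]
lemma reflect_reflect (N : ℤ) (p : ℤ × ℤ) : reflect N (reflect N p) = p := by
  ext <;> simp [reflect]

lemma adm_neg_iff (m : ℕ) (a : ℤ × ℤ) :
    Adm (-(m : ℤ)) a ↔ a.2 < a.1 ∧ ((m : ℤ) + 1) ∣ a.1 - a.2 + 1 := by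
  rw [Adm, sub_neg_eq_add, add_comm 1]
  constructor
  · rintro ⟨hlt, -, hdvd⟩
    exact ⟨hlt, hdvd⟩
  · rintro ⟨hlt, hdvd⟩
    have := Int.le_of_dvd (by omega) hdvd
    exact ⟨hlt, by omega, hdvd⟩

lemma isDiagL_iff_adm_reflect (N : ℤ) (m : ℕ) (p : ℤ × ℤ) :
    IsDiagL N m p ↔
      Adm (-(m : ℤ)) (reflect N p) ∧ 0 < (reflect N p).2 ∧ (reflect N p).1 < N + 1 := by
  have hlen : (reflect N p).1 - (reflect N p).2 + 1 = p.2 - p.1 + 1 := by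
    simp only [reflect]; ring
  rw [adm_neg_iff, hlen, IsDiagL]
  simp only [reflect]
  constructor
  · rintro ⟨h1, h12, h2, hdvd⟩
    exact ⟨⟨by omega, hdvd⟩, by omega, by omega⟩
  · rintro ⟨⟨h12, hdvd⟩, h2, h1⟩
    exact ⟨by omega, by omega, by omega, hdvd⟩

lemma crossD_iff_cross_reflect (N : ℤ) (p q : ℤ × ℤ) :
    CrossD p q ↔ Cross (reflect N p) (reflect N q) := by
  simp only [CrossD, Cross, reflect]
  omega

lemma shareV_iff_shareVertex_reflect (N : ℤ) (p q : ℤ × ℤ) :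
    ShareV p q ↔ ShareVertex (reflect N p) (reflect N q) := by
  simp only [ShareV, ShareVertex, reflect]
  omega

theorem stmt15_general (m : ℕ) (N : ℤ) :
    Set.BijOn (fun p : ℤ × ℤ => ((N + 1 - p.1, N + 1 - p.2) : ℤ × ℤ))
      {p | IsDiagL N m p}
      {a : ℤ × ℤ | Adm (-(m : ℤ)) a ∧ 0 < a.2 ∧ a.1 < N + 1} ∧
    ∀ p q : ℤ × ℤ, IsDiagL N m p → IsDiagL N m q →
      ((CrossD p q ↔ Cross (N + 1 - p.1, N + 1 - p.2) (N + 1 - q.1, N + 1 - q.2)) ∧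
       (ShareV p q ↔
        ShareVertex (N + 1 - p.1, N + 1 - p.2) (N + 1 - q.1, N + 1 - q.2))) := by
  refine ⟨?_, fun p q _ _ =>
    ⟨crossD_iff_cross_reflect N p q, shareV_iff_shareVertex_reflect N p q⟩⟩
  have hinv : Set.InvOn (reflect N) (reflect N) {p | IsDiagL N m p}
      {a | Adm (-(m : ℤ)) a ∧ 0 < a.2 ∧ a.1 < N + 1} :=
    ⟨fun a _ => reflect_reflect N a, fun p _ => reflect_reflect N p⟩
  exact hinv.bijOn (fun p hp => (isDiagL_iff_adm_reflect N m p).1 hp) fun a ha =>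
    (isDiagL_iff_adm_reflect N m (reflect N a)).2 (by rwa [reflect_reflect])

/-- Theorem 6.5 (key bijection): with `w = -m` and `d = -(m+1)`, the map
`G : {i,j} ↦ (N+1-i, N+1-j)` is a bijection from the `(m+1)`-diagonals of the regular
`N`-gon onto the `d`-admissible arcs `(x,y)` with `0 < y < x < N+1`; moreover two
diagonals cross (resp. share a vertex) iff their image arcs do. -/
theorem stmt15 (n m : ℕ) (hn : 1 ≤ n) (hm : 1 ≤ m) (N : ℤ)
    (hN : N = (n + 1) * (m + 1) - 2) :
    Set.BijOn (fun p : ℤ × ℤ => ((N + 1 - p.1, N + 1 - p.2) : ℤ × ℤ))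
      {p | IsDiagL N m p}
      {a : ℤ × ℤ | Adm (-(m : ℤ)) a ∧ 0 < a.2 ∧ a.1 < N + 1} ∧
    ∀ p q : ℤ × ℤ, IsDiagL N m p → IsDiagL N m q →
      ((CrossD p q ↔ Cross (N + 1 - p.1, N + 1 - p.2) (N + 1 - q.1, N + 1 - q.2)) ∧
       (ShareV p q ↔
        ShareVertex (N + 1 - p.1, N + 1 - p.2) (N + 1 - q.1, N + 1 - q.2))) :=
  stmt15_general m N

end PolygonDiagonals
end

section
/- The map f is a bijection from the set of |−1|-Hom-configurations onto the set of noncrossing partitions of ℤ having at most one infinite block. -/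
/- The case `w = -1`, `d = -2`: arcs of the ∞-gon with odd positive length, and
noncrossing partitions of `ℤ`. -/

namespace NegOneCY

/-- A `(-2)`-admissible arc: a pair of integers `(t,u)` with `t - u` positive and
odd. -/
def Arcm1 (a : ℤ × ℤ) : Prop := 0 < a.1 - a.2 ∧ Odd (a.1 - a.2)

/-- Arcs `(t,u)` and `(t',u')` cross if `u < u' < t < t'` or `u' < u < t' < t`. -/
def Cross (a b : ℤ × ℤ) : Prop :=
  (a.2 < b.2 ∧ b.2 < a.1 ∧ a.1 < b.1) ∨ (b.2 < a.2 ∧ a.2 < b.1 ∧ b.1 < a.1)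

/-- Arcs share a vertex if `{t,u} ∩ {t',u'} ≠ ∅`. -/
def ShareVertex (a b : ℤ × ℤ) : Prop :=
  a.1 = b.1 ∨ a.1 = b.2 ∨ a.2 = b.1 ∨ a.2 = b.2

/-- A collection of admissible arcs, pairwise noncrossing and pairwise sharing no
vertex. -/
def NCColl (H : Set (ℤ × ℤ)) : Prop :=
  (∀ a ∈ H, Arcm1 a) ∧ ∀ a ∈ H, ∀ b ∈ H, a ≠ b → ¬ Cross a b ∧ ¬ ShareVertex a b

/-- A `|-1|`-Hom-configuration: a maximal such collection. -/
def HomConfigM1 (H : Set (ℤ × ℤ)) : Prop :=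
  NCColl H ∧ ∀ H' : Set (ℤ × ℤ), NCColl H' → H ⊆ H' → H' = H

/-- `P` is a partition of `ℤ`: a set of pairwise disjoint nonempty blocks whose union
is all of `ℤ`. -/
def IsPartition (P : Set (Set ℤ)) : Prop :=
  (∀ B ∈ P, B.Nonempty) ∧ ∀ z : ℤ, ∃! B : Set ℤ, B ∈ P ∧ z ∈ B

/-- `P` is noncrossing: there are no `a < b < c < d` with `a, c` in one block and
`b, d` in a different block. -/
def Noncrossing (P : Set (Set ℤ)) : Prop :=
  ¬ ∃ a b c d : ℤ, a < b ∧ b < c ∧ c < d ∧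
    ∃ B ∈ P, ∃ B' ∈ P, B ≠ B' ∧ a ∈ B ∧ c ∈ B ∧ b ∈ B' ∧ d ∈ B'

/-- `f(H)`: the partition of `ℤ` into the equivalence classes of the equivalence
relation generated by `n ~ p` whenever the arc `(2p, 2n+1)` belongs to `H`. -/
def fmap (H : Set (ℤ × ℤ)) : Set (Set ℤ) :=
  {B | ∃ x : ℤ,
    B = {y | Relation.EqvGen (fun n p => ((2 * p, 2 * n + 1) : ℤ × ℤ) ∈ H) x y}}

/-!
Write an integer `n` as the two points `2n < 2n + 1`. An arc `(2p, 2n + 1)` of `H` links `n < p`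
in `fmap H`, and as no two arcs share a point the blocks of `fmap H` are chains of such arcs;
every other arc has an odd top `2M + 1` and an even bottom `2q`. The inverse of `fmap` is
`arcsOf`: join consecutive elements of each block, and close every bounded block by the arc from
`2 min` to `2 max + 1`.

In a maximal `H` every point under an arc is an endpoint: the interior of an arc has as many even
as odd points and the arcs nested in it pair even points with odd ones, so a free point comes with
a free point of the other parity, and the arc joining them could be added unless it crosses a
shorter arc, which again has a free point inside. Hence the chain of arcs starting at `q` under an
arc `(2M + 1, 2q)` reaches `M`, so `H ⊆ arcsOf (fmap H)`, with equality by maximality. The points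
left free by `arcsOf P` are `2 min B` for the blocks `B` unbounded above and `2 max B + 1` for
those unbounded below; maximality forbids a free pair of opposite parity, and together with
noncrossing this is exactly the condition that at most one block is infinite.
-/

open Set Relation

theorem eqvGen_iff_reflTransGen_or {α : Type*} {r : α → α → Prop} (hr : Relator.RightUnique r)
    (hl : Relator.LeftUnique r) {a b : α} :
    EqvGen r a b ↔ ReflTransGen r a b ∨ ReflTransGen r b a := by
  have hl' : Relator.RightUnique (Function.swap r) := fun _ _ _ h h' => hl h h'
  have hequiv : Equivalence fun a b => ReflTransGen r a b ∨ ReflTransGen r b a := by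
    refine ⟨fun _ => Or.inl .refl, Or.symm, ?_⟩
    rintro x y z (hxy | hyx) (hyz | hzy)
    · exact Or.inl (hxy.trans hyz)
    · exact (ReflTransGen.total_of_right_unique hl' (reflTransGen_swap.2 hxy)
        (reflTransGen_swap.2 hzy)).symm.imp reflTransGen_swap.1 reflTransGen_swap.1
    · exact ReflTransGen.total_of_right_unique hr hyx hyz
    · exact Or.inr (hzy.trans hyx)
  refine ⟨fun h => hequiv.eqvGen_iff.1 (EqvGen.mono (fun _ _ h => Or.inl (.single h)) _ _ h), ?_⟩
  rintro (h | h)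
  · exact EqvGen.reflTransGen_le_eqvGen r _ _ h
  · exact EqvGen.symm _ _ (EqvGen.reflTransGen_le_eqvGen r _ _ h)

theorem ncard_le_ncard_of_forall_subsingleton {α β : Type*} {s : Set α} {t : Set β}
    (r : α → β → Prop) (hs : ∀ a ∈ s, ∃ b ∈ t, r a b)
    (ht : ∀ b ∈ t, {a ∈ s | r a b}.Subsingleton) (htf : t.Finite := by toFinite_tac) :
    s.ncard ≤ t.ncard := by
  obtain rfl | ⟨a, ha⟩ := s.eq_empty_or_nonempty
  · simp
  have : Nonempty β := ⟨(hs a ha).choose⟩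
  choose! f hf hfr using hs
  refine ncard_le_ncard_of_injOn f hf (fun a ha a' ha' h => ?_) htf
  exact ht _ (hf a ha) ⟨ha, hfr a ha⟩ ⟨ha', by rw [h]; exact hfr a' ha'⟩

theorem ncard_Ioo_even_eq_ncard_Ioo_odd {u t : ℤ} (h : Odd (t - u)) :
    (Ioo u t ∩ {x | Even x}).ncard = (Ioo u t ∩ {x | Odd x}).ncard := by
  rw [Int.odd_iff] at h
  -- `σ` swaps the points of `Ioo u t` in pairs `(u+1, u+2), (u+3, u+4), …`
  set σ : ℤ → ℤ := fun x => x + 1 - 2 * ((x - u + 1) % 2) with hσ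
  have hmaps : ∀ x ∈ Ioo u t, σ x ∈ Ioo u t ∧ (σ x % 2 = 0 ↔ x % 2 = 1) := by
    rintro x ⟨h1, h2⟩
    simp only [hσ, mem_Ioo]
    omega
  have hinj : InjOn σ (Ioo u t) := fun x _ y _ hxy => by simp only [hσ] at hxy; omega
  refine le_antisymm (ncard_le_ncard_of_injOn σ ?_ (hinj.mono inter_subset_left))
    (ncard_le_ncard_of_injOn σ ?_ (hinj.mono inter_subset_left)) <;>
  · rintro x ⟨hx, hpar⟩
    refine ⟨(hmaps x hx).1, ?_⟩
    have := (hmaps x hx).2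
    simp only [mem_ofPred_eq, Int.even_iff, Int.odd_iff] at hpar ⊢
    omega

theorem exists_eq_two_mul_of_odd_sub {t u : ℤ} (h : Odd (t - u)) :
    ∃ q m, (t = 2 * q ∧ u = 2 * m + 1) ∨ (t = 2 * m + 1 ∧ u = 2 * q) := by
  rw [Int.odd_iff] at h
  rcases Int.emod_two_eq_zero_or_one t with ht | ht
  · exact ⟨t / 2, (u - 1) / 2, Or.inl ⟨by omega, by omega⟩⟩
  · exact ⟨u / 2, (t - 1) / 2, Or.inr ⟨by omega, by omega⟩⟩

theorem cross_comm {a b : ℤ × ℤ} : Cross a b ↔ Cross b a := or_comm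

theorem shareVertex_comm {a b : ℤ × ℤ} : ShareVertex a b ↔ ShareVertex b a := by
  simp only [ShareVertex, eq_comm]
  tauto

theorem mem_Ioo_of_cross {T U : ℤ} {c : ℤ × ℤ} (h : Cross (T, U) c) :
    (c.1 ∈ Ioo U T ∨ c.2 ∈ Ioo U T) ∧ (T ∈ Ioo c.2 c.1 ∨ U ∈ Ioo c.2 c.1) := by
  simp only [Cross, mem_Ioo] at *
  omega

def IsEndpoint (H : Set (ℤ × ℤ)) (x : ℤ) : Prop := ∃ y, (x, y) ∈ H ∨ (y, x) ∈ H

section NCColl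

variable {H : Set (ℤ × ℤ)}

theorem NCColl.lt (hH : NCColl H) {x y : ℤ} (h : (x, y) ∈ H) : y < x := by
  have := (hH.1 _ h).1
  simp only at this
  omega

theorem NCColl.odd_sub (hH : NCColl H) {x y : ℤ} (h : (x, y) ∈ H) : Odd (x - y) :=
  (hH.1 _ h).2

theorem NCColl.not_cross (hH : NCColl H) {a b : ℤ × ℤ} (ha : a ∈ H) (hb : b ∈ H) :
    ¬Cross a b := by
  rcases eq_or_ne a b with rfl | hab
  · unfold Cross
    omega
  · exact (hH.2 a ha b hb hab).1

theorem NCColl.eq_of_shareVertex (hH : NCColl H) {a b : ℤ × ℤ} (ha : a ∈ H) (hb : b ∈ H)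
    (h : ShareVertex a b) : a = b :=
  by_contra fun hab => (hH.2 a ha b hb hab).2 h

theorem NCColl.insert (hH : NCColl H) {b : ℤ × ℤ} (hb : Arcm1 b)
    (hc : ∀ c ∈ H, ¬Cross b c ∧ ¬ShareVertex b c) : NCColl (insert b H) := by
  refine ⟨fun a ha => ?_, fun a ha a' ha' hne => ?_⟩
  · rcases ha with rfl | ha
    exacts [hb, hH.1 a ha]
  · rcases ha with rfl | ha <;> rcases ha' with rfl | ha'
    · exact absurd rfl hne
    · exact hc a' ha'
    · rw [cross_comm, shareVertex_comm]
      exact hc a ha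
    · exact hH.2 a ha a' ha' hne

theorem NCColl.mem_Ioo_of_mem_Ioo (hH : NCColl H) {t u x y : ℤ} (htu : (t, u) ∈ H)
    (hxy : (x, y) ∈ H) (h : x ∈ Ioo u t ∨ y ∈ Ioo u t) : x ∈ Ioo u t ∧ y ∈ Ioo u t := by
  have hne : (x, y) ≠ (t, u) := by
    rintro ⟨⟩
    simp at h
  have hcomp := hH.2 _ hxy _ htu hne
  have := hH.lt hxy
  simp only [Cross, ShareVertex, mem_Ioo] at *
  omega

theorem NCColl.eq_of_mem_or_mem (hH : NCColl H) {x x' y : ℤ} (h : (x, y) ∈ H ∨ (y, x) ∈ H)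
    (h' : (x', y) ∈ H ∨ (y, x') ∈ H) : x = x' := by
  rcases h with h | h <;> rcases h' with h' | h' <;>
    have := hH.eq_of_shareVertex h h' (by simp [ShareVertex]) <;>
    simp only [Prod.mk.injEq] at this <;> omega

theorem NCColl.ncard_even_endpoints_eq (hH : NCColl H) {t u : ℤ} (htu : (t, u) ∈ H) :
    (Ioo u t ∩ {x | Even x} ∩ {x | IsEndpoint H x}).ncard =
      (Ioo u t ∩ {x | Odd x} ∩ {x | IsEndpoint H x}).ncard := by
  have partner : ∀ x ∈ Ioo u t, IsEndpoint H x →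
      ∃ y ∈ Ioo u t, ((x, y) ∈ H ∨ (y, x) ∈ H) ∧ (x - y) % 2 = 1 := by
    rintro x hx ⟨y, hxy⟩
    refine ⟨y, ?_, hxy, ?_⟩
    · rcases hxy with h | h
      exacts [(hH.mem_Ioo_of_mem_Ioo htu h (.inl hx)).2, (hH.mem_Ioo_of_mem_Ioo htu h (.inr hx)).1]
    · rcases hxy with h | h <;> have := Int.odd_iff.1 (hH.odd_sub h) <;> omega
  apply le_antisymm <;>
  refine ncard_le_ncard_of_forall_subsingleton (fun x y => (x, y) ∈ H ∨ (y, x) ∈ H) ?_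
    (fun y _ x hx x' hx' => hH.eq_of_mem_or_mem hx.2 hx'.2) <;>
  · rintro x ⟨⟨hx, hpar⟩, hxe⟩
    obtain ⟨y, hy, hxy, hodd⟩ := partner x hx hxe
    refine ⟨y, ⟨⟨hy, ?_⟩, x, hxy.symm⟩, hxy⟩
    simp only [mem_ofPred_eq, Int.even_iff, Int.odd_iff] at hpar ⊢
    omega

theorem NCColl.exists_pair_not_isEndpoint (hH : NCColl H) {t u v : ℤ} (htu : (t, u) ∈ H)
    (hv : v ∈ Ioo u t) (hfree : ¬IsEndpoint H v) :
    ∃ U T, U ∈ Ioo u t ∧ T ∈ Ioo u t ∧ U < T ∧ Odd (T - U) ∧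
      ¬IsEndpoint H U ∧ ¬IsEndpoint H T := by
  have := ncard_inter_add_ncard_sdiff_eq_ncard (Ioo u t ∩ {x | Even x}) {x | IsEndpoint H x}
  have := ncard_inter_add_ncard_sdiff_eq_ncard (Ioo u t ∩ {x | Odd x}) {x | IsEndpoint H x}
  have := hH.ncard_even_endpoints_eq htu
  have := ncard_Ioo_even_eq_ncard_Ioo_odd (hH.odd_sub htu)
  have hpos : 0 < ((Ioo u t ∩ {x | Even x}) \ {x | IsEndpoint H x}).ncard ∧
      0 < ((Ioo u t ∩ {x | Odd x}) \ {x | IsEndpoint H x}).ncard := by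
    rcases Int.even_or_odd v with hpar | hpar
    · have : 0 < ((Ioo u t ∩ {x | Even x}) \ {x | IsEndpoint H x}).ncard :=
        (ncard_pos).2 ⟨v, ⟨hv, hpar⟩, hfree⟩
      omega
    · have : 0 < ((Ioo u t ∩ {x | Odd x}) \ {x | IsEndpoint H x}).ncard :=
        (ncard_pos).2 ⟨v, ⟨hv, hpar⟩, hfree⟩
      omega
  obtain ⟨e, ⟨he, heven⟩, hefree⟩ := (ncard_pos).1 hpos.1
  obtain ⟨o, ⟨ho, hodd⟩, hofree⟩ := (ncard_pos).1 hpos.2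
  simp only [mem_ofPred_eq, Int.even_iff, Int.odd_iff] at heven hodd
  rcases lt_or_gt_of_ne (show e ≠ o by omega) with h | h
  · exact ⟨e, o, he, ho, h, Int.odd_iff.2 (by omega), hefree, hofree⟩
  · exact ⟨o, e, ho, he, h, Int.odd_iff.2 (by omega), hofree, hefree⟩

end NCColl

section HomConfigM1

variable {H : Set (ℤ × ℤ)}

theorem HomConfigM1.exists_cross (hH : HomConfigM1 H) {T U : ℤ} (hUT : U < T)
    (hodd : Odd (T - U)) (hU : ¬IsEndpoint H U) (hT : ¬IsEndpoint H T) :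
    ∃ c ∈ H, Cross (T, U) c := by
  by_contra! hcross
  have hins : NCColl (insert (T, U) H) := by
    refine hH.1.insert ⟨by simp only; omega, hodd⟩ fun ⟨c₁, c₂⟩ hc => ⟨hcross _ hc, ?_⟩
    rintro (h | h | h | h) <;> simp only at h <;> subst h
    exacts [hT ⟨c₂, .inl hc⟩, hT ⟨c₁, .inr hc⟩, hU ⟨c₂, .inl hc⟩, hU ⟨c₁, .inr hc⟩]
  exact hT ⟨U, .inl (hH.2 _ hins (subset_insert _ _) ▸ mem_insert _ _)⟩

theorem HomConfigM1.isEndpoint_of_mem_Ioo (hH : HomConfigM1 H) {t u v : ℤ} (htu : (t, u) ∈ H)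
    (hv : v ∈ Ioo u t) : IsEndpoint H v := by
  obtain ⟨n, hn⟩ : ∃ n, (t - u).toNat = n := ⟨_, rfl⟩
  induction n using Nat.strong_induction_on generalizing t u v with
  | _ n ih =>
  by_contra hfree
  obtain ⟨U, T, hU, hT, hUT, hodd, hUfree, hTfree⟩ := hH.1.exists_pair_not_isEndpoint htu hv hfree
  obtain ⟨⟨c₁, c₂⟩, hc, hcross⟩ := hH.exists_cross hUT hodd hUfree hTfree
  obtain ⟨hin, hout⟩ := mem_Ioo_of_cross hcross
  have hnest := hH.1.mem_Ioo_of_mem_Ioo htu hc (by simp only [mem_Ioo] at *; omega)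
  have hlt : (c₁ - c₂).toNat < n := by simp only [mem_Ioo] at *; omega
  rcases hout with h | h
  exacts [hTfree (ih _ hlt hc h rfl), hUfree (ih _ hlt hc h rfl)]

theorem HomConfigM1.isEndpoint_or_isEndpoint (hH : HomConfigM1 H) {x y : ℤ}
    (hxy : Odd (x - y)) : IsEndpoint H x ∨ IsEndpoint H y := by
  wlog hlt : y < x generalizing x y
  · have hyx : Odd (y - x) := by rw [← neg_sub]; exact hxy.neg
    exact (this hyx (by rw [Int.odd_iff] at hxy; omega)).symm
  by_contra! hfree
  obtain ⟨⟨c₁, c₂⟩, hc, hcross⟩ := hH.exists_cross hlt hxy hfree.2 hfree.1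
  rcases (mem_Ioo_of_cross hcross).2 with h | h
  exacts [hfree.1 (hH.isEndpoint_of_mem_Ioo hc h), hfree.2 (hH.isEndpoint_of_mem_Ioo hc h)]

end HomConfigM1

section Partition

variable {P : Set (Set ℤ)}

theorem IsPartition.eq_of_mem (hP : IsPartition P) {B B' : Set ℤ} (hB : B ∈ P) (hB' : B' ∈ P)
    {x : ℤ} (hx : x ∈ B) (hx' : x ∈ B') : B = B' :=
  (hP.2 x).unique ⟨hB, hx⟩ ⟨hB', hx'⟩

theorem Noncrossing.eq_of_interlace (hNC : Noncrossing P) (hP : IsPartition P) {B B' : Set ℤ}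
    (hB : B ∈ P) (hB' : B' ∈ P) {a b c d : ℤ} (ha : a ∈ B) (hc : c ∈ B) (hb : b ∈ B')
    (hd : d ∈ B') (hab : a ≤ b) (hbc : b ≤ c) (hcd : c ≤ d) : B = B' := by
  rcases hab.eq_or_lt with rfl | hab
  · exact hP.eq_of_mem hB hB' ha hb
  rcases hbc.eq_or_lt with rfl | hbc
  · exact hP.eq_of_mem hB hB' hc hb
  rcases hcd.eq_or_lt with rfl | hcd
  · exact hP.eq_of_mem hB hB' hc hd
  by_contra hne
  exact hNC ⟨a, b, c, d, hab, hbc, hcd, B, hB, B', hB', hne, ha, hc, hb, hd⟩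

theorem Noncrossing.eq_of_not_bddAbove (hNC : Noncrossing P) {B B' : Set ℤ} (hB : B ∈ P)
    (hB' : B' ∈ P) (h : ¬BddAbove B) (h' : ¬BddAbove B') : B = B' := by
  by_contra hne
  rw [not_bddAbove_iff] at h h'
  obtain ⟨a, ha, -⟩ := h 0
  obtain ⟨b, hb, hab⟩ := h' a
  obtain ⟨c, hc, hbc⟩ := h b
  obtain ⟨d, hd, hcd⟩ := h' c
  exact hNC ⟨a, b, c, d, hab, hbc, hcd, B, hB, B', hB', hne, ha, hc, hb, hd⟩

theorem Noncrossing.eq_of_not_bddBelow (hNC : Noncrossing P) {B B' : Set ℤ} (hB : B ∈ P)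
    (hB' : B' ∈ P) (h : ¬BddBelow B) (h' : ¬BddBelow B') : B = B' := by
  by_contra hne
  rw [not_bddBelow_iff] at h h'
  obtain ⟨d, hd, -⟩ := h 0
  obtain ⟨c, hc, hcd⟩ := h' d
  obtain ⟨b, hb, hbc⟩ := h c
  obtain ⟨a, ha, hab⟩ := h' b
  exact hNC ⟨a, b, c, d, hab, hbc, hcd, B', hB', B, hB, Ne.symm hne, ha, hc, hb, hd⟩

def IsBlockSucc (P : Set (Set ℤ)) (p q : ℤ) : Prop := ∃ B ∈ P, p ∈ B ∧ IsLeast {x ∈ B | p < x} q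

theorem IsBlockSucc.of_mem (hP : IsPartition P) {p q : ℤ} (h : IsBlockSucc P p q) {B : Set ℤ}
    (hB : B ∈ P) (hpq : p ∈ B ∨ q ∈ B) : p ∈ B ∧ IsLeast {x ∈ B | p < x} q := by
  obtain ⟨B', hB', hp, hq⟩ := h
  obtain rfl : B' = B := hpq.elim (hP.eq_of_mem hB' hB hp) (hP.eq_of_mem hB' hB hq.1.1)
  exact ⟨hp, hq⟩

theorem IsBlockSucc.left_unique (hP : IsPartition P) {p p' q : ℤ} (h : IsBlockSucc P p q)
    (h' : IsBlockSucc P p' q) : p = p' := by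
  obtain ⟨B, hB, hp, ⟨hq, hpq⟩, hmin⟩ := h
  obtain ⟨hp', ⟨-, hp'q⟩, hmin'⟩ := h'.of_mem hP hB (.inr hq)
  by_contra hne
  rcases lt_or_gt_of_ne hne with hlt | hlt
  · exact (hmin ⟨hp', hlt⟩).not_gt hp'q
  · exact (hmin' ⟨hp, hlt⟩).not_gt hpq

theorem IsBlockSucc.right_unique (hP : IsPartition P) {p q q' : ℤ} (h : IsBlockSucc P p q)
    (h' : IsBlockSucc P p q') : q = q' := by
  obtain ⟨B, hB, hp, hq⟩ := h
  exact hq.unique (h'.of_mem hP hB (.inl hp)).2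

theorem exists_isBlockSucc_le {B : Set ℤ} (hB : B ∈ P) {x y : ℤ} (hx : x ∈ B) (hy : y ∈ B)
    (hxy : x < y) : ∃ s ∈ B, x < s ∧ s ≤ y ∧ IsBlockSucc P x s := by
  obtain ⟨s, hs⟩ := BddBelow.exists_isLeast_of_nonempty (S := {z ∈ B | x < z})
    ⟨x, fun _ hz => hz.2.le⟩ ⟨y, hy, hxy⟩
  exact ⟨s, hs.1.1, hs.1.2, hs.2 ⟨hy, hxy⟩, B, hB, hx, hs⟩

theorem exists_le_isBlockSucc {B : Set ℤ} (hB : B ∈ P) {x y : ℤ} (hx : x ∈ B) (hy : y ∈ B)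
    (hxy : x < y) : ∃ p ∈ B, x ≤ p ∧ IsBlockSucc P p y := by
  obtain ⟨p, ⟨hpB, hpy⟩, hp⟩ := BddAbove.exists_isGreatest_of_nonempty (S := {z ∈ B | z < y})
    ⟨y, fun _ hz => hz.2.le⟩ ⟨x, hx, hxy⟩
  refine ⟨p, hpB, hp ⟨hx, hxy⟩, B, hB, hpB, ⟨hy, hpy⟩, fun z ⟨hzB, hpz⟩ => ?_⟩
  by_contra! hzy
  exact (hp ⟨hzB, hzy⟩).not_gt hpz

theorem eqvGen_isBlockSucc {B : Set ℤ} (hB : B ∈ P) {x y : ℤ} (hx : x ∈ B) (hy : y ∈ B) :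
    EqvGen (IsBlockSucc P) x y := by
  wlog hxy : x ≤ y generalizing x y
  · exact .symm _ _ (this hy hx (by omega))
  obtain ⟨n, hn⟩ : ∃ n, (y - x).toNat = n := ⟨_, rfl⟩
  induction n using Nat.strong_induction_on generalizing x with
  | _ n ih =>
  rcases hxy.eq_or_lt with rfl | hlt
  · exact .refl x
  obtain ⟨s, hs, hxs, hsy, hsucc⟩ := exists_isBlockSucc_le hB hx hy hlt
  exact .trans _ _ _ (.rel _ _ hsucc) (ih _ (by omega) hs hsy rfl)

theorem IsPartition.mem_of_eqvGen_isBlockSucc (hP : IsPartition P) {B : Set ℤ} (hB : B ∈ P)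
    {x y : ℤ} (hx : x ∈ B) (h : EqvGen (IsBlockSucc P) x y) : y ∈ B := by
  induction h generalizing B with
  | rel x y hxy => exact (hxy.of_mem hP hB (.inl hx)).2.1.1
  | refl => exact hx
  | symm x y _ ih =>
    obtain ⟨B', hB', hx'⟩ := (hP.2 x).exists
    exact hP.eq_of_mem hB' hB (ih hB' hx') hx ▸ hx'
  | trans x y z _ _ ih ih' => exact ih' hB (ih hB hx)

end Partition

def PosArc (H : Set (ℤ × ℤ)) (n p : ℤ) : Prop := ((2 * p, 2 * n + 1) : ℤ × ℤ) ∈ H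

section PosArc

variable {H : Set (ℤ × ℤ)}

theorem mem_fmap {B : Set ℤ} : B ∈ fmap H ↔ ∃ x, B = {y | EqvGen (PosArc H) x y} := Iff.rfl

theorem mem_block_iff_eqvGen {B : Set ℤ} (hB : B ∈ fmap H) {x y : ℤ} (hx : x ∈ B) :
    y ∈ B ↔ EqvGen (PosArc H) x y := by
  obtain ⟨x₀, rfl⟩ := hB
  exact ⟨fun hy => .trans _ _ _ (.symm _ _ hx) hy, fun hxy => .trans _ _ _ hx hxy⟩

theorem isPartition_fmap (H : Set (ℤ × ℤ)) : IsPartition (fmap H) := by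
  refine ⟨fun B ⟨x, hB⟩ => ⟨x, hB ▸ EqvGen.refl x⟩, fun z => ⟨_, ⟨⟨z, rfl⟩, .refl z⟩, ?_⟩⟩
  rintro B ⟨hB, hz⟩
  ext y
  exact mem_block_iff_eqvGen hB hz

theorem NCColl.lt_of_posArc (hH : NCColl H) {n p : ℤ} (h : PosArc H n p) : n < p := by
  have := hH.lt h
  omega

theorem NCColl.posArc_rightUnique (hH : NCColl H) : Relator.RightUnique (PosArc H) :=
  fun _ _ _ h h' => by
    have := hH.eq_of_shareVertex h h' (by simp [ShareVertex])
    simp only [Prod.mk.injEq] at this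
    omega

theorem NCColl.posArc_leftUnique (hH : NCColl H) : Relator.LeftUnique (PosArc H) :=
  fun _ _ _ h h' => by
    have := hH.eq_of_shareVertex h h' (by simp [ShareVertex])
    simp only [Prod.mk.injEq] at this
    omega

theorem NCColl.le_of_reflTransGen (hH : NCColl H) {x y : ℤ}
    (h : ReflTransGen (PosArc H) x y) : x ≤ y := by
  induction h with
  | refl => rfl
  | tail _ hyz ih => exact ih.trans (hH.lt_of_posArc hyz).le

theorem NCColl.reflTransGen_of_eqvGen (hH : NCColl H) {x y : ℤ} (h : EqvGen (PosArc H) x y)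
    (hxy : x ≤ y) : ReflTransGen (PosArc H) x y := by
  rcases (eqvGen_iff_reflTransGen_or hH.posArc_rightUnique hH.posArc_leftUnique).1 h with h | h
  · exact h
  · obtain rfl := le_antisymm hxy (hH.le_of_reflTransGen h)
    exact .refl

theorem NCColl.exists_posArc_straddle (hH : NCColl H) {a b c : ℤ}
    (hac : ReflTransGen (PosArc H) a c) (hab : a < b) (hbc : b ≤ c) :
    ∃ x y, ReflTransGen (PosArc H) a x ∧ PosArc H x y ∧ x < b ∧ b ≤ y ∧ y ≤ c := by
  induction hac with
  | refl => omega
  | @tail m c ham hmc ih =>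
    by_cases hmb : m < b
    · exact ⟨m, c, ham, hmc, hmb, hbc, le_rfl⟩
    · obtain ⟨x, y, h₁, h₂, h₃, h₄, h₅⟩ := ih (by omega)
      exact ⟨x, y, h₁, h₂, h₃, h₄, h₅.trans (hH.lt_of_posArc hmc).le⟩

theorem NCColl.noncrossing_fmap (hH : NCColl H) : Noncrossing (fmap H) := by
  rintro ⟨a, b, c, d, hab, hbc, hcd, B, hB, B', hB', hne, ha, hc, hb, hd⟩
  have hsep : ∀ {x}, x ∈ B → x ∉ B' := fun hx hx' =>
    hne ((isPartition_fmap H).eq_of_mem hB hB' hx hx')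
  have hac := hH.reflTransGen_of_eqvGen ((mem_block_iff_eqvGen hB ha).1 hc) (by omega)
  have hbd := hH.reflTransGen_of_eqvGen ((mem_block_iff_eqvGen hB' hb).1 hd) (by omega)
  have mem : ∀ {C x y}, C ∈ fmap H → x ∈ C → ReflTransGen (PosArc H) x y → y ∈ C :=
    fun hC hx h => (mem_block_iff_eqvGen hC hx).2 (EqvGen.reflTransGen_le_eqvGen _ _ _ h)
  -- the chain from `b` to `d` jumps over `c` by an arc `(x₁, y₁)`, and the chain from `a` to
  -- `c` jumps over `x₁` by an arc `(x₂, y₂)`: these two arcs cross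
  obtain ⟨x₁, y₁, hbx₁, h₁, hx₁c, hcy₁, hy₁d⟩ := hH.exists_posArc_straddle hbd hbc hcd.le
  have hx₁ : x₁ ∈ B' := mem hB' hb hbx₁
  have hcy₁ : c < y₁ := hcy₁.lt_of_ne fun h => hsep hc (h ▸ mem hB' hb (hbx₁.tail h₁))
  obtain ⟨x₂, y₂, hax₂, h₂, hx₂x₁, hx₁y₂, hy₂c⟩ :=
    hH.exists_posArc_straddle hac (hab.trans_le (hH.le_of_reflTransGen hbx₁)) hx₁c.le
  have hx₁y₂ : x₁ < y₂ := hx₁y₂.lt_of_ne fun h => hsep (h ▸ mem hB ha (hax₂.tail h₂)) hx₁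
  exact hH.not_cross h₂ h₁ (by simp only [Cross]; omega)

theorem NCColl.isLeast_of_forall_not_posArc (hH : NCColl H) {x q : ℤ}
    (hq : EqvGen (PosArc H) x q) (h : ∀ n, ¬PosArc H n q) :
    IsLeast {y | EqvGen (PosArc H) x y} q := by
  refine ⟨hq, fun y hy => ?_⟩
  have hqy : EqvGen (PosArc H) q y := .trans _ _ _ (.symm _ _ hq) hy
  rcases (eqvGen_iff_reflTransGen_or hH.posArc_rightUnique hH.posArc_leftUnique).1 hqy
    with h' | h'
  · exact hH.le_of_reflTransGen h'
  · rcases h'.cases_tail with rfl | ⟨n, -, hn⟩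
    exacts [le_rfl, (h n hn).elim]

theorem NCColl.isGreatest_of_forall_not_posArc (hH : NCColl H) {x m : ℤ}
    (hm : EqvGen (PosArc H) x m) (h : ∀ p, ¬PosArc H m p) :
    IsGreatest {y | EqvGen (PosArc H) x y} m := by
  refine ⟨hm, fun y hy => ?_⟩
  have hmy : EqvGen (PosArc H) m y := .trans _ _ _ (.symm _ _ hm) hy
  rcases (eqvGen_iff_reflTransGen_or hH.posArc_rightUnique hH.posArc_leftUnique).1 hmy
    with h' | h'
  · rcases h'.cases_head with rfl | ⟨p, hp, -⟩
    exacts [le_rfl, (h p hp).elim]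
  · exact hH.le_of_reflTransGen h'

theorem NCColl.isBlockSucc_fmap (hH : NCColl H) {n p : ℤ} (h : PosArc H n p) :
    IsBlockSucc (fmap H) n p := by
  refine ⟨{y | EqvGen (PosArc H) n y}, ⟨n, rfl⟩, .refl n, ⟨.rel _ _ h, hH.lt_of_posArc h⟩,
    fun x ⟨hx, hnx⟩ => ?_⟩
  rcases (hH.reflTransGen_of_eqvGen hx hnx.le).cases_head with rfl | ⟨p', hp', hp'x⟩
  · exact absurd hnx (lt_irrefl n)
  · obtain rfl := hH.posArc_rightUnique h hp'
    exact hH.le_of_reflTransGen hp'x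

theorem HomConfigM1.reflTransGen_of_mem (hH : HomConfigM1 H) {q m : ℤ}
    (hqm : (2 * m + 1, 2 * q) ∈ H) : ReflTransGen (PosArc H) q m := by
  have hle : q ≤ m := by have := hH.1.lt hqm; omega
  obtain ⟨x, ⟨hqx, hxm⟩, hmax⟩ := Int.exists_greatest_of_bdd
    (P := fun x => ReflTransGen (PosArc H) q x ∧ x ≤ m) ⟨m, fun _ h => h.2⟩ ⟨q, .refl, hle⟩
  rcases hxm.eq_or_lt with rfl | hxm
  · exact hqx
  have hqx' := hH.1.le_of_reflTransGen hqx
  exfalso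
  -- `x` is the last point of the chain from `q` below `m`. The point `2x + 1` under the arc is an
  -- endpoint: an arc `(2z, 2x + 1)` would prolong the chain, and an arc `(2x + 1, 2z)` would cross
  -- or touch the arc of the chain jumping over `z`.
  obtain ⟨y, hy | hy⟩ :=
    hH.isEndpoint_of_mem_Ioo hqm (v := 2 * x + 1) (by simp only [mem_Ioo]; omega)
  · have hy' := (hH.1.mem_Ioo_of_mem_Ioo hqm hy (.inl (by simp only [mem_Ioo]; omega))).2
    have hodd := Int.odd_iff.1 (hH.1.odd_sub hy)
    obtain ⟨z, rfl⟩ : ∃ z, y = 2 * z := ⟨y / 2, by omega⟩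
    simp only [mem_Ioo] at hy'
    have := hH.1.lt hy
    obtain ⟨a, b, -, hab, ha, hb, hbx⟩ :=
      hH.1.exists_posArc_straddle hqx (b := z) (by omega) (by omega)
    rcases hb.eq_or_lt with rfl | hb
    · have := hH.1.eq_of_shareVertex hab hy (by simp [ShareVertex])
      simp only [Prod.mk.injEq] at this
      omega
    · exact hH.1.not_cross hab hy (by simp only [Cross]; omega)
  · have hy' := (hH.1.mem_Ioo_of_mem_Ioo hqm hy (.inr (by simp only [mem_Ioo]; omega))).1
    have hodd := Int.odd_iff.1 (hH.1.odd_sub hy)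
    obtain ⟨z, rfl⟩ : ∃ z, y = 2 * z := ⟨y / 2, by omega⟩
    simp only [mem_Ioo] at hy'
    have := hmax z ⟨hqx.tail hy, by omega⟩
    have := hH.1.lt_of_posArc hy
    omega

end PosArc

section arcsOf

variable {P : Set (Set ℤ)}

def arcsOf (P : Set (Set ℤ)) : Set (ℤ × ℤ) :=
  {a | (∃ p q, IsBlockSucc P p q ∧ a = (2 * q, 2 * p + 1)) ∨
    ∃ B ∈ P, ∃ q M, IsLeast B q ∧ IsGreatest B M ∧ a = (2 * M + 1, 2 * q)}

theorem arcm1_of_mem_arcsOf {a : ℤ × ℤ} (ha : a ∈ arcsOf P) : Arcm1 a := by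
  rcases ha with ⟨p, q, ⟨-, -, -, ⟨-, hpq⟩, -⟩, rfl⟩ | ⟨B, -, q, M, hq, hM, rfl⟩
  · exact ⟨by simp only; omega, q - p - 1, by simp only; ring⟩
  · have := hq.2 hM.1
    exact ⟨by simp only; omega, M - q, by simp only; ring⟩

theorem IsPartition.not_shareVertex_of_isBlockSucc (hP : IsPartition P) {p q q' M : ℤ}
    (hpq : IsBlockSucc P p q) {B : Set ℤ} (hB : B ∈ P) (hq' : IsLeast B q')
    (hM : IsGreatest B M) : ¬ShareVertex (2 * q, 2 * p + 1) (2 * M + 1, 2 * q') := by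
  simp only [ShareVertex]
  rintro (h | h | h | h)
  · omega
  · obtain rfl : q = q' := by omega
    obtain ⟨hp, ⟨-, hpq⟩, -⟩ := hpq.of_mem hP hB (.inr hq'.1)
    exact (hq'.2 hp).not_gt hpq
  · obtain rfl : p = M := by omega
    obtain ⟨-, ⟨hq, hpq⟩, -⟩ := hpq.of_mem hP hB (.inl hM.1)
    exact (hM.2 hq).not_gt hpq
  · omega

theorem IsPartition.eq_of_shareVertex_arcsOf (hP : IsPartition P) {a b : ℤ × ℤ}
    (ha : a ∈ arcsOf P) (hb : b ∈ arcsOf P) (h : ShareVertex a b) : a = b := by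
  rcases ha with ⟨p, q, hpq, rfl⟩ | ⟨B, hB, q, M, hq, hM, rfl⟩ <;>
    rcases hb with ⟨p', q', hpq', rfl⟩ | ⟨B', hB', q', M', hq', hM', rfl⟩
  · simp only [ShareVertex, Prod.mk.injEq] at h ⊢
    rcases h with h | h | h | h
    · obtain rfl : q = q' := by omega
      obtain rfl := hpq.left_unique hP hpq'
      exact ⟨rfl, rfl⟩
    · omega
    · omega
    · obtain rfl : p = p' := by omega
      obtain rfl := hpq.right_unique hP hpq'
      exact ⟨rfl, rfl⟩
  · exact absurd h (hP.not_shareVertex_of_isBlockSucc hpq hB' hq' hM')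
  · exact absurd (shareVertex_comm.1 h) (hP.not_shareVertex_of_isBlockSucc hpq' hB hq hM)
  · simp only [ShareVertex, Prod.mk.injEq] at h ⊢
    rcases h with h | h | h | h
    · obtain rfl : M = M' := by omega
      obtain rfl := hP.eq_of_mem hB hB' hM.1 hM'.1
      exact ⟨rfl, by rw [hq.unique hq']⟩
    · omega
    · omega
    · obtain rfl : q = q' := by omega
      obtain rfl := hP.eq_of_mem hB hB' hq.1 hq'.1
      exact ⟨by rw [hM.unique hM'], rfl⟩

theorem IsPartition.not_cross_arcsOf (hP : IsPartition P) (hNC : Noncrossing P) {a b : ℤ × ℤ}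
    (ha : a ∈ arcsOf P) (hb : b ∈ arcsOf P) : ¬Cross a b := by
  suffices h : ∀ a ∈ arcsOf P, ∀ b ∈ arcsOf P, ¬(a.2 < b.2 ∧ b.2 < a.1 ∧ a.1 < b.1) by
    rintro (h' | h')
    exacts [h a ha b hb h', h b hb a ha h']
  rintro _ (⟨p, q, ⟨B, hB, hp, ⟨hq, hpq⟩, hmin⟩, rfl⟩ | ⟨B, hB, q, M, hq, hM, rfl⟩)
    _ (⟨p', q', ⟨B', hB', hp', ⟨hq', -⟩, -⟩, rfl⟩ | ⟨B', hB', q', M', hq', hM', rfl⟩) h <;>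
    simp only at h
  · obtain rfl := hNC.eq_of_interlace hP hB hB' hp hq hp' hq' (by omega) (by omega) (by omega)
    have := hmin ⟨hp', by omega⟩
    omega
  · obtain rfl := hNC.eq_of_interlace hP hB hB' hp hq hq'.1 hM'.1 (by omega) (by omega) (by omega)
    have := hq'.2 hp
    omega
  · obtain rfl := hNC.eq_of_interlace hP hB hB' hq.1 hM.1 hp' hq' (by omega) (by omega) (by omega)
    have := hM.2 hq'
    omega
  · obtain rfl := hNC.eq_of_interlace hP hB hB' hq.1 hM.1 hq'.1 hM'.1 (by omega) (by omega)
      (by omega)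
    have := hq.unique hq'
    omega

theorem IsPartition.ncColl_arcsOf (hP : IsPartition P) (hNC : Noncrossing P) :
    NCColl (arcsOf P) :=
  ⟨fun _ ha => arcm1_of_mem_arcsOf ha, fun _ ha _ hb hab =>
    ⟨hP.not_cross_arcsOf hNC ha hb, fun h => hab (hP.eq_of_shareVertex_arcsOf ha hb h)⟩⟩

theorem posArc_arcsOf : PosArc (arcsOf P) = IsBlockSucc P := by
  ext n p
  simp only [PosArc, arcsOf, mem_ofPred_eq, Prod.mk.injEq]
  refine ⟨?_, fun h => .inl ⟨n, p, h, rfl, rfl⟩⟩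
  rintro (⟨n', p', h, hp, hn⟩ | ⟨_, _, _, _, _, _, h, -⟩)
  · obtain rfl : p = p' := by omega
    obtain rfl : n = n' := by omega
    exact h
  · omega

theorem IsPartition.fmap_arcsOf (hP : IsPartition P) : fmap (arcsOf P) = P := by
  have hblock : ∀ B ∈ P, ∀ x ∈ B, {y | EqvGen (PosArc (arcsOf P)) x y} = B := by
    intro B hB x hx
    ext y
    rw [posArc_arcsOf]
    exact ⟨hP.mem_of_eqvGen_isBlockSucc hB hx, eqvGen_isBlockSucc hB hx⟩
  ext B
  constructor
  · intro hB
    obtain ⟨x, rfl⟩ := mem_fmap.1 hB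
    obtain ⟨B, hB, hx⟩ := (hP.2 x).exists
    rwa [hblock B hB x hx]
  · intro hB
    obtain ⟨x, hx⟩ := hP.1 B hB
    exact ⟨x, (hblock B hB x hx).symm⟩

theorem IsPartition.not_isEndpoint_arcsOf_two_mul_iff (hP : IsPartition P) {q : ℤ} :
    ¬IsEndpoint (arcsOf P) (2 * q) ↔ ∃ B ∈ P, IsLeast B q ∧ ¬BddAbove B := by
  constructor
  · intro hfree
    obtain ⟨B, hB, hqB⟩ := (hP.2 q).exists
    have hq : IsLeast B q := by
      refine ⟨hqB, fun x hx => ?_⟩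
      by_contra! hxq
      obtain ⟨p, -, -, hpq⟩ := exists_le_isBlockSucc hB hx hqB hxq
      exact hfree ⟨2 * p + 1, .inl (.inl ⟨p, q, hpq, rfl⟩)⟩
    refine ⟨B, hB, hq, fun hbdd => ?_⟩
    obtain ⟨M, hM⟩ := hbdd.exists_isGreatest_of_nonempty ⟨q, hqB⟩
    exact hfree ⟨2 * M + 1, .inr (.inr ⟨B, hB, q, M, hq, hM, rfl⟩)⟩
  · rintro ⟨B, hB, hq, hunb⟩ ⟨y, (⟨p, q', hpq, h⟩ | ⟨_, _, _, _, _, _, h⟩) |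
      (⟨_, _, _, h⟩ | ⟨B', hB', q', M, hq', hM, h⟩)⟩ <;> simp only [Prod.mk.injEq] at h
    · obtain rfl : q' = q := by omega
      obtain ⟨hp, ⟨-, hpq⟩, -⟩ := hpq.of_mem hP hB (.inr hq.1)
      exact (hq.2 hp).not_gt hpq
    · omega
    · omega
    · obtain rfl : q' = q := by omega
      obtain rfl := hP.eq_of_mem hB hB' hq.1 hq'.1
      exact hunb ⟨M, hM.2⟩

theorem IsPartition.not_isEndpoint_arcsOf_two_mul_add_one_iff (hP : IsPartition P) {m : ℤ} :
    ¬IsEndpoint (arcsOf P) (2 * m + 1) ↔ ∃ B ∈ P, IsGreatest B m ∧ ¬BddBelow B := by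
  constructor
  · intro hfree
    obtain ⟨B, hB, hmB⟩ := (hP.2 m).exists
    have hm : IsGreatest B m := by
      refine ⟨hmB, fun x hx => ?_⟩
      by_contra! hmx
      obtain ⟨s, -, -, -, hms⟩ := exists_isBlockSucc_le hB hmB hx hmx
      exact hfree ⟨2 * s, .inr (.inl ⟨m, s, hms, rfl⟩)⟩
    refine ⟨B, hB, hm, fun hbdd => ?_⟩
    obtain ⟨q, hq⟩ := hbdd.exists_isLeast_of_nonempty ⟨m, hmB⟩
    exact hfree ⟨2 * q, .inl (.inr ⟨B, hB, q, m, hq, hm, rfl⟩)⟩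
  · rintro ⟨B, hB, hm, hunb⟩ ⟨y, (⟨_, _, _, h⟩ | ⟨B', hB', q, M, hq, hM, h⟩) |
      (⟨p, s, hps, h⟩ | ⟨_, _, _, _, _, _, h⟩)⟩ <;> simp only [Prod.mk.injEq] at h
    · omega
    · obtain rfl : M = m := by omega
      obtain rfl := hP.eq_of_mem hB hB' hm.1 hM.1
      exact hunb ⟨q, hq.2⟩
    · obtain rfl : p = m := by omega
      obtain ⟨-, ⟨hs, hps⟩, -⟩ := hps.of_mem hP hB (.inl hm.1)
      exact (hm.2 hs).not_gt hps
    · omega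

theorem IsPartition.isEndpoint_arcsOf_or (hP : IsPartition P)
    (hinf : ∀ B ∈ P, ∀ B' ∈ P, B.Infinite → B'.Infinite → B = B') (q m : ℤ) :
    IsEndpoint (arcsOf P) (2 * q) ∨ IsEndpoint (arcsOf P) (2 * m + 1) := by
  by_contra! h
  obtain ⟨B, hB, hq, hunb⟩ := hP.not_isEndpoint_arcsOf_two_mul_iff.1 h.1
  obtain ⟨B', hB', -, hunb'⟩ := hP.not_isEndpoint_arcsOf_two_mul_add_one_iff.1 h.2
  obtain rfl := hinf B hB B' hB' (fun hfin => hunb hfin.bddAbove) fun hfin => hunb' hfin.bddBelow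
  exact hunb' ⟨q, hq.2⟩

theorem IsPartition.arcsOf_maximal (hP : IsPartition P)
    (hinf : ∀ B ∈ P, ∀ B' ∈ P, B.Infinite → B'.Infinite → B = B') {H : Set (ℤ × ℤ)}
    (hH : NCColl H) (hsub : arcsOf P ⊆ H) : H = arcsOf P := by
  refine Subset.antisymm (fun ⟨t, u⟩ ha => ?_) hsub
  by_contra hna
  have hfree : ∀ x, x = t ∨ x = u → ¬IsEndpoint (arcsOf P) x := by
    rintro x hx ⟨y, hy | hy⟩ <;>
    · have := hH.eq_of_shareVertex ha (hsub hy) (by simp only [ShareVertex]; omega)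
      exact hna (this ▸ hy)
  obtain ⟨q, m, ⟨rfl, rfl⟩ | ⟨rfl, rfl⟩⟩ := exists_eq_two_mul_of_odd_sub (hH.odd_sub ha)
  · exact (hP.isEndpoint_arcsOf_or hinf q m).elim (hfree _ (.inl rfl)) (hfree _ (.inr rfl))
  · exact (hP.isEndpoint_arcsOf_or hinf q m).elim (hfree _ (.inr rfl)) (hfree _ (.inl rfl))

end arcsOf

section HomConfigM1

variable {H : Set (ℤ × ℤ)}

theorem HomConfigM1.subset_arcsOf (hH : HomConfigM1 H) : H ⊆ arcsOf (fmap H) := by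
  rintro ⟨t, u⟩ ha
  obtain ⟨q, m, ⟨rfl, rfl⟩ | ⟨rfl, rfl⟩⟩ := exists_eq_two_mul_of_odd_sub (hH.1.odd_sub ha)
  · exact .inl ⟨m, q, hH.1.isBlockSucc_fmap ha, rfl⟩
  refine .inr ⟨_, ⟨q, rfl⟩, q, m, hH.1.isLeast_of_forall_not_posArc (.refl q) fun n hn => ?_,
    hH.1.isGreatest_of_forall_not_posArc
      (EqvGen.reflTransGen_le_eqvGen _ _ _ (hH.reflTransGen_of_mem ha)) fun p hp => ?_, rfl⟩
  · have := hH.1.eq_of_shareVertex ha hn (by simp [ShareVertex])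
    simp only [Prod.mk.injEq] at this
    omega
  · have := hH.1.eq_of_shareVertex ha hp (by simp [ShareVertex])
    simp only [Prod.mk.injEq] at this
    omega

theorem HomConfigM1.arcsOf_fmap (hH : HomConfigM1 H) : arcsOf (fmap H) = H :=
  hH.2 _ ((isPartition_fmap H).ncColl_arcsOf hH.1.noncrossing_fmap) hH.subset_arcsOf

theorem HomConfigM1.eq_of_not_bddAbove_of_not_bddBelow (hH : HomConfigM1 H) {B B' : Set ℤ}
    (hB : B ∈ fmap H) (hB' : B' ∈ fmap H) (h : ¬BddAbove B) (h' : ¬BddBelow B') : B = B' := by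
  have hNC := hH.1.noncrossing_fmap
  by_cases hb : BddBelow B
  swap
  · exact hNC.eq_of_not_bddBelow hB hB' hb h'
  by_cases hb' : BddAbove B'
  swap
  · exact hNC.eq_of_not_bddAbove hB hB' h hb'
  have hP := isPartition_fmap H
  obtain ⟨q, hq⟩ := hb.exists_isLeast_of_nonempty (nonempty_of_not_bddAbove h)
  obtain ⟨m, hm⟩ := hb'.exists_isGreatest_of_nonempty (nonempty_of_not_bddBelow h')
  have hq_free := hP.not_isEndpoint_arcsOf_two_mul_iff.2 ⟨B, hB, hq, h⟩
  have hm_free := hP.not_isEndpoint_arcsOf_two_mul_add_one_iff.2 ⟨B', hB', hm, h'⟩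
  rw [hH.arcsOf_fmap] at hq_free hm_free
  exact ((hH.isEndpoint_or_isEndpoint ⟨q - m - 1, by ring⟩).elim hq_free hm_free).elim

theorem HomConfigM1.eq_of_infinite (hH : HomConfigM1 H) {B B' : Set ℤ} (hB : B ∈ fmap H)
    (hB' : B' ∈ fmap H) (hinf : B.Infinite) (hinf' : B'.Infinite) : B = B' := by
  have hNC := hH.1.noncrossing_fmap
  have unbounded : ∀ {C : Set ℤ}, C.Infinite → ¬BddAbove C ∨ ¬BddBelow C := fun hC => by
    by_contra! h
    exact hC (h.2.finite_of_bddAbove h.1)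
  rcases unbounded hinf with h | h <;> rcases unbounded hinf' with h' | h'
  · exact hNC.eq_of_not_bddAbove hB hB' h h'
  · exact hH.eq_of_not_bddAbove_of_not_bddBelow hB hB' h h'
  · exact (hH.eq_of_not_bddAbove_of_not_bddBelow hB' hB h' h).symm
  · exact hNC.eq_of_not_bddBelow hB hB' h h'

end HomConfigM1

/-- Proposition 7.2: `f` is a bijection from the set of `|-1|`-Hom-configurations onto
the set of noncrossing partitions of `ℤ` having at most one infinite block. -/
theorem stmt17 :
    Set.BijOn fmap {H | HomConfigM1 H}
      {P | IsPartition P ∧ Noncrossing P ∧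
        ∀ B ∈ P, ∀ B' ∈ P, B.Infinite → B'.Infinite → B = B'} := by
  refine ⟨fun H hH => ⟨isPartition_fmap H, hH.1.noncrossing_fmap,
      fun B hB B' hB' => hH.eq_of_infinite hB hB'⟩,
    fun H hH H' hH' heq => ?_,
    fun P ⟨hP, hNC, hinf⟩ => ⟨arcsOf P, ⟨hP.ncColl_arcsOf hNC,
      fun _ hH' hsub => hP.arcsOf_maximal hinf hH' hsub⟩, hP.fmap_arcsOf⟩⟩
  calc H = arcsOf (fmap H) := hH.arcsOf_fmap.symm
    _ = arcsOf (fmap H') := by rw [heq]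
    _ = H' := hH'.arcsOf_fmap

end NegOneCY
end
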